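/- arXiv:2004.03683 — 7 statements merged into one kernel-verified Lean document; each statement's English description precedes it below -/
import Mathlib

section
/- Let μ : 𝒳 → [0,1] be measurable with sup_{x ∈ 𝒳} |μ(x) − μ_0(x)| ≤ s, and suppose the margin condition P( |μ_0(X) − 1/2| < t ) ≤ κ t holds for every t > 0, where κ > 0. Then the probability that the classifiers 1{μ(·) > 1/2} and 1{μ_0(·) > 1/2} disagree at X satisfies P( 1{μ(X) > 1/2} ≠ 1{μ_0(X) > 1/2} ) ≤ κ s. -/
open MeasureTheory ProbabilityTheory

/-- If `sup_x |μ(x) − μ0(x)| ≤ s` and the margin condition `P(|μ0(X) − 1/2| < t) ≤ κ t`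
holds for all `t > 0`, then the classifiers `1{μ(·) > 1/2}` and `1{μ0(·) > 1/2}` disagree at `X`
with probability at most `κ s`. -/
theorem stmt5 {Ω 𝒳 : Type*} [MeasurableSpace Ω] [MeasurableSpace 𝒳]
    (P : Measure Ω) [IsProbabilityMeasure P]
    (X : Ω → 𝒳) (hX : Measurable X)
    (Y : Ω → ℝ) (hY : Measurable Y) (hY01 : ∀ ω, Y ω = 0 ∨ Y ω = 1)
    (μ0 : 𝒳 → ℝ) (hμ0 : Measurable μ0) (hμ0mem : ∀ x, μ0 x ∈ Set.Icc (0 : ℝ) 1)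
    (hcond : (fun ω => μ0 (X ω)) =ᵐ[P] P[Y | MeasurableSpace.comap X inferInstance])
    (μ : 𝒳 → ℝ) (hμ : Measurable μ) (hμmem : ∀ x, μ x ∈ Set.Icc (0 : ℝ) 1)
    (s : ℝ) (hs : ∀ x, |μ x - μ0 x| ≤ s)
    (κ : ℝ) (hκ : 0 < κ)
    (hmargin : ∀ t > (0 : ℝ), (P {ω | |μ0 (X ω) - 1 / 2| < t}).toReal ≤ κ * t) :
    (P {ω | (if 1 / 2 < μ (X ω) then (1 : ℝ) else 0) ≠
        (if 1 / 2 < μ0 (X ω) then (1 : ℝ) else 0)}).toReal ≤ κ * s := by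

  -- s is nonnegative since 𝒳 is nonempty (Ω is nonempty as P is a probability measure)
  have hΩ : Nonempty Ω := by
    by_contra h
    simp only [not_nonempty_iff] at h
    have := measure_univ (μ := P)
    rw [Set.univ_eq_empty_iff.mpr (by infer_instance)] at this
    simp at this
  obtain ⟨ω0⟩ := hΩ
  have hs0 : 0 ≤ s := le_trans (abs_nonneg _) (hs (X ω0))
  rcases eq_or_lt_of_le hs0 with h0 | h0
  · -- s = 0 : μ = μ0, disagreement set is empty
    have hset : {ω | (if 1 / 2 < μ (X ω) then (1 : ℝ) else 0) ≠
        (if 1 / 2 < μ0 (X ω) then (1 : ℝ) else 0)} = ∅ := by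
      ext ω
      simp only [Set.mem_setOf_eq, Set.mem_empty_iff_false, iff_false, not_not]
      have : μ (X ω) = μ0 (X ω) := by
        have := hs (X ω)
        rw [← h0] at this
        have := abs_nonpos_iff.mp this
        linarith
      rw [this]
    rw [hset]
    simp [← h0]
  · have hsub : ∀ t > s, {ω | (if 1 / 2 < μ (X ω) then (1 : ℝ) else 0) ≠
        (if 1 / 2 < μ0 (X ω) then (1 : ℝ) else 0)} ⊆ {ω | |μ0 (X ω) - 1 / 2| < t} := by
      intro t ht
      intro ω hω
      simp only [Set.mem_setOf_eq] at hω ⊢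
      have habs := hs (X ω)
      by_cases h1 : 1 / 2 < μ (X ω) <;> by_cases h2 : 1 / 2 < μ0 (X ω)
      · exact absurd (by rw [if_pos h1, if_pos h2]) hω
      · -- 1/2 < μ, μ0 ≤ 1/2
        push_neg at h2
        rw [abs_of_nonpos (by linarith)]
        have := le_abs_self (μ (X ω) - μ0 (X ω))
        linarith
      · push_neg at h1
        rw [abs_of_nonneg (by linarith)]
        have : μ0 (X ω) - μ (X ω) ≤ |μ (X ω) - μ0 (X ω)| := by
          rw [abs_sub_comm]; exact le_abs_self _
        linarith
      · exact absurd (by rw [if_neg h1, if_neg h2]) hω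
    refine le_of_forall_pos_le_add fun ε hε => ?_
    have hts : s < s + ε / κ := by have : 0 < ε / κ := div_pos hε hκ; linarith
    calc (P {ω | (if 1 / 2 < μ (X ω) then (1 : ℝ) else 0) ≠
        (if 1 / 2 < μ0 (X ω) then (1 : ℝ) else 0)}).toReal
        ≤ (P {ω | |μ0 (X ω) - 1 / 2| < s + ε / κ}).toReal :=
          ENNReal.toReal_mono (measure_ne_top P _) (measure_mono (hsub _ hts))
      _ ≤ κ * (s + ε / κ) := hmargin _ (by linarith)
      _ = κ * s + ε := by field_simp
end

section
/- Let μ : 𝒳 → [0,1] be measurable with sup_{x ∈ 𝒳} |μ(x) − μ_0(x)| ≤ s, and let E denote the event { μ_0(X) ≥ 1/2 > μ(X) }. If P(E) > 0, then | P(Y = 1 ∣ E) − 1/2 | ≤ s. -/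
/-!
On `E` the regression function `μ0 ∘ X` lies in `[1/2, 1/2 + s]`: it is at least `1/2` by
definition of `E`, and at most `μ ∘ X + s < 1/2 + s`. Since `E` is `σ(X)`-measurable,
`P(Y = 1 ∣ E)`, the average of `Y` over `E`, equals the average of `E[Y ∣ σ(X)] = μ0 ∘ X`
over `E`, which lies in the same interval.
-/

open MeasureTheory ProbabilityTheory Set

section

variable {Ω : Type*} {mΩ : MeasurableSpace Ω}

lemma setIntegral_eq_measureReal_of_zero_or_one {μ : Measure Ω} {Y : Ω → ℝ} (hY : Measurable Y)
    (hY01 : ∀ ω, Y ω = 0 ∨ Y ω = 1) (s : Set Ω) :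
    ∫ ω in s, Y ω ∂μ = μ.real (s ∩ {ω | Y ω = 1}) := by
  have hY_eq : Y = (Y ⁻¹' {1}).indicator 1 := by
    ext ω
    rcases hY01 ω with h | h <;> simp [h]
  conv_lhs => rw [hY_eq]
  rw [setIntegral_indicator (hY (measurableSet_singleton 1))]
  simp [preimage]

lemma cond_toReal_eq_setAverage_of_zero_or_one {μ : Measure Ω} {Y : Ω → ℝ} (hY : Measurable Y)
    (hY01 : ∀ ω, Y ω = 0 ∨ Y ω = 1) {s : Set Ω} (hs : MeasurableSet s) :
    (μ[|s] {ω | Y ω = 1}).toReal = ⨍ ω in s, Y ω ∂μ := by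
  rw [cond_apply hs, setAverage_eq, setIntegral_eq_measureReal_of_zero_or_one hY hY01,
    ENNReal.toReal_mul, ENNReal.toReal_inv, smul_eq_mul]
  rfl

lemma setAverage_condExp {F : Type*} [NormedAddCommGroup F] [NormedSpace ℝ F] [CompleteSpace F]
    {m : MeasurableSpace Ω} {μ : Measure[mΩ] Ω} (hm : m ≤ mΩ) [SigmaFinite (μ.trim hm)]
    {f : Ω → F} (hf : Integrable f μ) {s : Set Ω} (hs : MeasurableSet[m] s) :
    ⨍ ω in s, (μ[f | m]) ω ∂μ = ⨍ ω in s, f ω ∂μ := by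
  rw [setAverage_eq, setAverage_eq, setIntegral_condExp hm hf hs]

end

theorem stmt6_general {Ω 𝒳 : Type*} [MeasurableSpace Ω] [MeasurableSpace 𝒳]
    (P : Measure Ω) [IsProbabilityMeasure P]
    (X : Ω → 𝒳) (hX : Measurable X)
    (Y : Ω → ℝ) (hY : Measurable Y) (hY01 : ∀ ω, Y ω = 0 ∨ Y ω = 1)
    (μ0 : 𝒳 → ℝ) (hμ0 : Measurable μ0)
    (hcond : (fun ω => μ0 (X ω)) =ᵐ[P] P[Y | MeasurableSpace.comap X inferInstance])
    (μ : 𝒳 → ℝ) (hμ : Measurable μ)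
    (s : ℝ) (hs : ∀ x, |μ x - μ0 x| ≤ s)
    (E : Set Ω) (hE : E = {ω | 1 / 2 ≤ μ0 (X ω) ∧ μ (X ω) < 1 / 2})
    (hEpos : 0 < P E) :
    |(P[|E] {ω | Y ω = 1}).toReal - 1 / 2| ≤ s := by
  have hm := hX.comap_le
  have hEm : MeasurableSet[MeasurableSpace.comap X inferInstance] E := by
    rw [hE]
    exact ⟨_, (measurableSet_le measurable_const hμ0).inter (measurableSet_lt hμ measurable_const),
      rfl⟩
  have hYint : Integrable Y P := by
    refine .of_bound hY.aestronglyMeasurable 1 (ae_of_all _ fun ω => ?_)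
    rcases hY01 ω with h | h <;> simp [h]
  have hμ0X_mem : ∀ ω ∈ E, μ0 (X ω) ∈ Icc (1 / 2) (1 / 2 + s) := by
    rw [hE]
    rintro ω ⟨hμ0_ge, hμ_lt⟩
    exact ⟨hμ0_ge, by linarith [(abs_le.1 (hs (X ω))).1]⟩
  have havg : ⨍ ω in E, μ0 (X ω) ∂P ∈ Icc (1 / 2) (1 / 2 + s) :=
    (convex_Icc _ _).set_average_mem isClosed_Icc hEpos.ne' (measure_ne_top _ _)
      ((ae_restrict_iff' (hm _ hEm)).2 (ae_of_all _ hμ0X_mem))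
      (integrable_condExp.congr hcond.symm).integrableOn
  rw [cond_toReal_eq_setAverage_of_zero_or_one hY hY01 (hm _ hEm), ← setAverage_condExp hm hYint hEm,
    average_congr (ae_restrict_of_ae hcond.symm)]
  exact abs_sub_le_iff.2 ⟨by linarith [havg.2], by linarith [havg.1, havg.2]⟩

/-- If `sup_x |μ(x) − μ0(x)| ≤ s` and `E = {μ0(X) ≥ 1/2 > μ(X)}` has positive probability,
then `|P(Y = 1 ∣ E) − 1/2| ≤ s`. -/
theorem stmt6 {Ω 𝒳 : Type*} [MeasurableSpace Ω] [MeasurableSpace 𝒳]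
    (P : Measure Ω) [IsProbabilityMeasure P]
    (X : Ω → 𝒳) (hX : Measurable X)
    (Y : Ω → ℝ) (hY : Measurable Y) (hY01 : ∀ ω, Y ω = 0 ∨ Y ω = 1)
    (μ0 : 𝒳 → ℝ) (hμ0 : Measurable μ0) (hμ0mem : ∀ x, μ0 x ∈ Set.Icc (0 : ℝ) 1)
    (hcond : (fun ω => μ0 (X ω)) =ᵐ[P] P[Y | MeasurableSpace.comap X inferInstance])
    (μ : 𝒳 → ℝ) (hμ : Measurable μ) (hμmem : ∀ x, μ x ∈ Set.Icc (0 : ℝ) 1)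
    (s : ℝ) (hs : ∀ x, |μ x - μ0 x| ≤ s)
    (E : Set Ω) (hE : E = {ω | 1 / 2 ≤ μ0 (X ω) ∧ μ (X ω) < 1 / 2})
    (hEpos : 0 < P E) :
    |(P[|E] {ω | Y ω = 1}).toReal - 1 / 2| ≤ s :=
  stmt6_general P X hX Y hY hY01 μ0 hμ0 hcond μ hμ s hs E hE hEpos
end

section
/- Let μ : 𝒳 → [0,1] be measurable with sup_{x ∈ 𝒳} |μ(x) − μ_0(x)| ≤ s, and suppose the margin condition P( |μ_0(X) − 1/2| < t ) ≤ κ t holds for every t > 0, where κ > 0. Set b_0(x) = 1{μ_0(x) > 1/2} and f(x) = 1{μ(x) > 1/2}. Then 0 ≤ P(Y = b_0(X)) − P(Y = f(X)) ≤ 4 κ s². -/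
/-!
Given `X`, the label `Y` is Bernoulli with parameter `μ0 X`, so a `{0,1}`-valued classifier `h X`
is correct with conditional probability `h μ0 + (1 - h)(1 - μ0)`. Hence the regret of `f` is
`E[(b0 - f)(X) (2 μ0(X) - 1)]`. Its integrand is nonnegative and vanishes unless `μ` and `μ0` lie
on different sides of `1/2`; then `|μ0 - 1/2| ≤ s`, so the integrand is at most `2 s`, and the
margin condition at `t = 2 s` bounds the probability of that event by `2 κ s`.
-/

open MeasureTheory ProbabilityTheory

section ConditionalExpectation

variable {Ω : Type*} {m m₀ : MeasurableSpace Ω} {P : Measure Ω} [IsFiniteMeasure P]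
  {Y H G η : Ω → ℝ}

lemma condExp_indicator_setOf_eq_ae_eq (hm : m ≤ m₀) (hY : Integrable Y P)
    (hY01 : ∀ ω, Y ω = 0 ∨ Y ω = 1) (hH : StronglyMeasurable[m] H)
    (hH01 : ∀ ω, H ω = 0 ∨ H ω = 1) :
    P[{ω | Y ω = H ω}.indicator 1 | m] =ᵐ[P] H * P[Y | m] + (1 - H) * (1 - P[Y | m]) := by
  have hH' : StronglyMeasurable[m] (1 - H) := stronglyMeasurable_const.sub hH
  have hH_le : ∀ᵐ ω ∂P, ‖H ω‖ ≤ 1 := .of_forall fun ω => by rcases hH01 ω with h | h <;> simp [h]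
  have hH'_le : ∀ᵐ ω ∂P, ‖(1 - H) ω‖ ≤ 1 :=
    .of_forall fun ω => by rcases hH01 ω with h | h <;> simp [h]
  have hY' : Integrable (1 - Y) P := (integrable_const 1).sub hY
  have hHY : Integrable (H * Y) P := hY.bdd_mul (hH.mono hm).aestronglyMeasurable hH_le
  have hHY' : Integrable ((1 - H) * (1 - Y)) P :=
    hY'.bdd_mul (hH'.mono hm).aestronglyMeasurable hH'_le
  have hsplit : {ω | Y ω = H ω}.indicator 1 = H * Y + (1 - H) * (1 - Y) := by
    ext ω
    rcases hY01 ω with hy | hy <;> rcases hH01 ω with hh | hh <;> simp [hy, hh]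
  calc P[{ω | Y ω = H ω}.indicator 1 | m]
      =ᵐ[P] P[H * Y | m] + P[(1 - H) * (1 - Y) | m] := by
        rw [hsplit]; exact condExp_add hHY hHY' m
    _ =ᵐ[P] H * P[Y | m] + (1 - H) * P[1 - Y | m] :=
      (condExp_stronglyMeasurable_mul_of_bound hm hH hY 1 hH_le).add
        (condExp_stronglyMeasurable_mul_of_bound hm hH' hY' 1 hH'_le)
    _ =ᵐ[P] H * P[Y | m] + (1 - H) * (1 - P[Y | m]) := by
      refine Filter.EventuallyEq.rfl.add (Filter.EventuallyEq.rfl.mul ?_)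
      filter_upwards [condExp_sub (integrable_const 1) hY m] with ω hω
      rwa [condExp_const hm] at hω

lemma measureReal_eq_sub_measureReal_eq (hm : m ≤ m₀) (hY : Measurable Y)
    (hY01 : ∀ ω, Y ω = 0 ∨ Y ω = 1) (hH : StronglyMeasurable[m] H)
    (hH01 : ∀ ω, H ω = 0 ∨ H ω = 1) (hG : StronglyMeasurable[m] G)
    (hG01 : ∀ ω, G ω = 0 ∨ G ω = 1) (hη : η =ᵐ[P] P[Y | m]) :
    P.real {ω | Y ω = H ω} - P.real {ω | Y ω = G ω} = ∫ ω, (H ω - G ω) * (2 * η ω - 1) ∂P := by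
  have hYi : Integrable Y P := .of_bound hY.aestronglyMeasurable 1
    (.of_forall fun ω => by rcases hY01 ω with h | h <;> simp [h])
  have hreal : ∀ {F : Ω → ℝ}, StronglyMeasurable[m] F →
      P.real {ω | Y ω = F ω} = ∫ ω, P[{ω | Y ω = F ω}.indicator 1 | m] ω ∂P := fun hF => by
    rw [integral_condExp hm,
      integral_indicator_one (measurableSet_eq_fun hY (hF.mono hm).measurable)]
  rw [hreal hH, hreal hG, ← integral_sub integrable_condExp integrable_condExp]
  refine integral_congr_ae ?_
  filter_upwards [condExp_indicator_setOf_eq_ae_eq hm hYi hY01 hH hH01,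
    condExp_indicator_setOf_eq_ae_eq hm hYi hY01 hG hG01, hη] with ω hHω hGω hηω
  simp only [hHω, hGω, hηω, Pi.add_apply, Pi.mul_apply, Pi.sub_apply, Pi.one_apply]
  ring

lemma integral_le_of_le_ite_of_margin {Z g : Ω → ℝ} {s κ : ℝ} (hZ : Measurable Z)
    (hg0 : ∀ ω, 0 ≤ g ω) (hg : ∀ ω, g ω ≤ if |Z ω| < 2 * s then 2 * s else 0) (hκ : 0 ≤ κ)
    (hmargin : ∀ t > 0, P.real {ω | |Z ω| < t} ≤ κ * t) :
    ∫ ω, g ω ∂P ≤ 4 * κ * s ^ 2 := by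
  set T := {ω | |Z ω| < 2 * s}
  have hT : MeasurableSet T := measurableSet_lt hZ.abs measurable_const
  calc ∫ ω, g ω ∂P ≤ ∫ ω, T.indicator (fun _ => 2 * s) ω ∂P :=
        integral_mono_of_nonneg (.of_forall hg0) ((integrable_const _).indicator hT)
          (.of_forall fun ω => by simpa only [Set.indicator_apply, T, Set.mem_ofPred] using hg ω)
    _ = P.real T * (2 * s) := integral_indicator_const _ hT
    _ ≤ 4 * κ * s ^ 2 := by
      rcases le_or_gt s 0 with hs | hs
      · have hT_empty : T = ∅ := Set.eq_empty_of_forall_notMem fun ω hω =>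
          (abs_nonneg (Z ω)).not_gt (hω.trans_le (by linarith))
        rw [hT_empty, measureReal_empty, zero_mul]
        positivity
      · nlinarith [hmargin (2 * s) (by linarith)]

end ConditionalExpectation

lemma ite_sub_ite_mul_nonneg (a b : ℝ) :
    0 ≤ ((if 1 / 2 < a then 1 else 0) - (if 1 / 2 < b then 1 else 0)) * (2 * a - 1) := by
  split_ifs <;> nlinarith

lemma ite_sub_ite_mul_le {a b s : ℝ} (hab : |b - a| ≤ s) :
    ((if 1 / 2 < a then 1 else 0) - (if 1 / 2 < b then 1 else 0)) * (2 * a - 1) ≤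
      if |a - 1 / 2| < 2 * s then 2 * s else 0 := by
  have hs : 0 ≤ s := (abs_nonneg _).trans hab
  obtain ⟨hab₁, hab₂⟩ := abs_le.mp hab
  have hite : 0 ≤ if |a - 1 / 2| < 2 * s then 2 * s else 0 := by split_ifs <;> linarith
  by_cases ha : 1 / 2 < a <;> by_cases hb : 1 / 2 < b
  · simpa only [if_pos ha, if_pos hb, sub_self, zero_mul] using hite
  · rw [if_pos ha, if_neg hb, if_pos (abs_lt.mpr ⟨by linarith, by linarith⟩)]
    linarith
  · rw [if_neg ha, if_pos hb, if_pos (abs_lt.mpr ⟨by linarith, by linarith⟩)]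
    linarith
  · simpa only [if_neg ha, if_neg hb, sub_self, zero_mul] using hite

theorem stmt7_general {Ω 𝒳 : Type*} [MeasurableSpace Ω] [MeasurableSpace 𝒳]
    (P : Measure Ω) [IsProbabilityMeasure P]
    (X : Ω → 𝒳) (hX : Measurable X)
    (Y : Ω → ℝ) (hY : Measurable Y) (hY01 : ∀ ω, Y ω = 0 ∨ Y ω = 1)
    (μ0 : 𝒳 → ℝ) (hμ0 : Measurable μ0)
    (hcond : (fun ω => μ0 (X ω)) =ᵐ[P] P[Y | MeasurableSpace.comap X inferInstance])
    (μ : 𝒳 → ℝ) (hμ : Measurable μ)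
    (s : ℝ) (hs : ∀ x, |μ x - μ0 x| ≤ s)
    (κ : ℝ) (hκ : 0 < κ)
    (hmargin : ∀ t > (0 : ℝ), (P {ω | |μ0 (X ω) - 1 / 2| < t}).toReal ≤ κ * t)
    (b0 : 𝒳 → ℝ) (hb0 : ∀ x, b0 x = if 1 / 2 < μ0 x then 1 else 0)
    (f : 𝒳 → ℝ) (hf : ∀ x, f x = if 1 / 2 < μ x then 1 else 0) :
    0 ≤ (P {ω | Y ω = b0 (X ω)}).toReal - (P {ω | Y ω = f (X ω)}).toReal ∧
    (P {ω | Y ω = b0 (X ω)}).toReal - (P {ω | Y ω = f (X ω)}).toReal ≤ 4 * κ * s ^ 2 := by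
  have hb0m : Measurable b0 := by
    rw [funext hb0]
    exact .ite (measurableSet_lt measurable_const hμ0) measurable_const measurable_const
  have hfm : Measurable f := by
    rw [funext hf]
    exact .ite (measurableSet_lt measurable_const hμ) measurable_const measurable_const
  have hregret := measureReal_eq_sub_measureReal_eq hX.comap_le hY hY01
    (H := fun ω => b0 (X ω)) (hb0m.comp (comap_measurable X)).stronglyMeasurable
    (fun ω => by rw [hb0]; exact (ite_eq_or_eq _ 1 0).symm)
    (G := fun ω => f (X ω)) (hfm.comp (comap_measurable X)).stronglyMeasurable
    (fun ω => by rw [hf]; exact (ite_eq_or_eq _ 1 0).symm) hcond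
  rw [measureReal_def, measureReal_def] at hregret
  rw [hregret]
  have hgap_nonneg : ∀ ω, 0 ≤ (b0 (X ω) - f (X ω)) * (2 * μ0 (X ω) - 1) := fun ω => by
    rw [hb0, hf]; exact ite_sub_ite_mul_nonneg _ _
  refine ⟨integral_nonneg hgap_nonneg, integral_le_of_le_ite_of_margin
    (Z := fun ω => μ0 (X ω) - 1 / 2) ((hμ0.comp hX).sub measurable_const) hgap_nonneg
    (fun ω => ?_) hκ.le hmargin⟩
  rw [hb0, hf]
  exact ite_sub_ite_mul_le (hs (X ω))

/-- If `sup_x |μ(x) − μ0(x)| ≤ s` and the margin condition `P(|μ0(X) − 1/2| < t) ≤ κ t`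
holds for all `t > 0`, then with `b0 = 1{μ0 > 1/2}` and `f = 1{μ > 1/2}`,
`0 ≤ P(Y = b0(X)) − P(Y = f(X)) ≤ 4 κ s²`. -/
theorem stmt7 {Ω 𝒳 : Type*} [MeasurableSpace Ω] [MeasurableSpace 𝒳]
    (P : Measure Ω) [IsProbabilityMeasure P]
    (X : Ω → 𝒳) (hX : Measurable X)
    (Y : Ω → ℝ) (hY : Measurable Y) (hY01 : ∀ ω, Y ω = 0 ∨ Y ω = 1)
    (μ0 : 𝒳 → ℝ) (hμ0 : Measurable μ0) (hμ0mem : ∀ x, μ0 x ∈ Set.Icc (0 : ℝ) 1)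
    (hcond : (fun ω => μ0 (X ω)) =ᵐ[P] P[Y | MeasurableSpace.comap X inferInstance])
    (μ : 𝒳 → ℝ) (hμ : Measurable μ) (hμmem : ∀ x, μ x ∈ Set.Icc (0 : ℝ) 1)
    (s : ℝ) (hs : ∀ x, |μ x - μ0 x| ≤ s)
    (κ : ℝ) (hκ : 0 < κ)
    (hmargin : ∀ t > (0 : ℝ), (P {ω | |μ0 (X ω) - 1 / 2| < t}).toReal ≤ κ * t)
    (b0 : 𝒳 → ℝ) (hb0 : ∀ x, b0 x = if 1 / 2 < μ0 x then 1 else 0)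
    (f : 𝒳 → ℝ) (hf : ∀ x, f x = if 1 / 2 < μ x then 1 else 0) :
    0 ≤ (P {ω | Y ω = b0 (X ω)}).toReal - (P {ω | Y ω = f (X ω)}).toReal ∧
    (P {ω | Y ω = b0 (X ω)}).toReal - (P {ω | Y ω = f (X ω)}).toReal ≤ 4 * κ * s ^ 2 :=
  stmt7_general P X hX Y hY hY01 μ0 hμ0 hcond μ hμ s hs κ hκ hmargin b0 hb0 f hf
end

section
/- Let f : 𝒳 → ℝ be measurable and assume that P( μ_0(X_1) = μ_0(X_2) ) = 0 and P( f(X_1) = f(X_2) ) = 0. Then P{ μ_0(X_1) < μ_0(X_2), Y_1 = 0, Y_2 = 1 } − P{ f(X_1) < f(X_2), Y_1 = 0, Y_2 = 1 } = (1/2) E[ (μ_0(X_2) − μ_0(X_1)) · 1{ μ_0(X_1) < μ_0(X_2), f(X_1) > f(X_2) } ] + (1/2) E[ (μ_0(X_1) − μ_0(X_2)) · 1{ μ_0(X_1) > μ_0(X_2), f(X_1) < f(X_2) } ], and this quantity is nonnegative. Consequently, if 0 < P(Y = 1) < 1, then P( f(X_1) < f(X_2) ∣ Y_1 = 0, Y_2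 = 1 ) ≤ P( μ_0(X_1) < μ_0(X_2) ∣ Y_1 = 0, Y_2 = 1 ); that is, the conditional mean μ_0 maximizes the area under the ROC curve. -/
/-! Conditioning on the features turns the label event `{Y₁ = 0, Y₂ = 1}` into the weight
`(1 - μ₀ x₁) μ₀ x₂` on the law `π ⊗ π` of `(X₁, X₂)`, so the AUC numerator of a score `s` is
`∫_{s x₁ < s x₂} (1 - μ₀ x₁) μ₀ x₂ d(π ⊗ π)`. Averaging the difference of the numerators of `μ₀`
and `f` with its image under the swap `(x₁, x₂) ↦ (x₂, x₁)`, which reverses both orderings off the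
null set of ties, the weight collapses to `(1 - μ₀ x₁) μ₀ x₂ - (1 - μ₀ x₂) μ₀ x₁ = μ₀ x₂ - μ₀ x₁`
on the pairs that `μ₀` and `f` rank differently, and this has the sign of the `μ₀`-ranking. -/

open MeasureTheory ProbabilityTheory

section PullOut

variable {Ω α : Type*} [MeasurableSpace Ω] [MeasurableSpace α] {P : Measure Ω} [IsFiniteMeasure P]
  {X : Ω → α} {U : Ω → ℝ} {a : α → ℝ}

theorem integral_comp_mul_eq_of_condExp (hX : Measurable X) (hU : Integrable U P)
    (ha : (fun ω => a (X ω)) =ᵐ[P] P[U | MeasurableSpace.comap X inferInstance])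
    {h : α → ℝ} (hh : Measurable h) {C : ℝ} (hC : ∀ x, |h x| ≤ C) :
    ∫ ω, h (X ω) * U ω ∂P = ∫ ω, h (X ω) * a (X ω) ∂P := by
  have hhX : StronglyMeasurable[MeasurableSpace.comap X inferInstance] (fun ω => h (X ω)) :=
    (hh.comp (comap_measurable X)).stronglyMeasurable
  calc ∫ ω, h (X ω) * U ω ∂P
      = ∫ ω, P[(fun ω => h (X ω)) * U | MeasurableSpace.comap X inferInstance] ω ∂P :=
        (integral_condExp hX.comap_le).symm
    _ = ∫ ω, h (X ω) * a (X ω) ∂P := by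
        refine integral_congr_ae ?_
        filter_upwards [condExp_stronglyMeasurable_mul_of_bound hX.comap_le hhX hU C
          (ae_of_all _ fun ω => hC (X ω)), ha] with ω hω haω
        rw [hω, Pi.mul_apply, haω]

theorem one_sub_ae_eq_condExp_one_sub (hX : Measurable X) (hU : Integrable U P)
    (ha : (fun ω => a (X ω)) =ᵐ[P] P[U | MeasurableSpace.comap X inferInstance]) :
    (fun ω => 1 - a (X ω)) =ᵐ[P] P[fun ω => 1 - U ω | MeasurableSpace.comap X inferInstance] := by
  filter_upwards [condExp_sub (integrable_const (1 : ℝ)) hU (MeasurableSpace.comap X inferInstance),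
    ha] with ω hsub haω
  rw [show (fun ω => 1 - U ω) = (fun _ => (1 : ℝ)) - U from rfl, hsub, Pi.sub_apply,
    condExp_const hX.comap_le, haω]

theorem integral_prod_comp_mul_mul_eq_of_condExp {Ω' β : Type*} [MeasurableSpace Ω']
    [MeasurableSpace β] {Q : Measure Ω'} [IsFiniteMeasure Q] {X' : Ω' → β} {V : Ω' → ℝ}
    {b : β → ℝ} (hX : Measurable X) (hU : Integrable U P)
    (ha : (fun ω => a (X ω)) =ᵐ[P] P[U | MeasurableSpace.comap X inferInstance])
    (hX' : Measurable X') (hV : Integrable V Q) (hb : Measurable b)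
    (hb' : (fun ω => b (X' ω)) =ᵐ[Q] Q[V | MeasurableSpace.comap X' inferInstance])
    {g : α × β → ℝ} (hg : Measurable g) {C : ℝ} (hC : ∀ p, |g p| ≤ C) :
    ∫ q, g (X q.1, X' q.2) * (U q.1 * V q.2) ∂(P.prod Q)
      = ∫ q, g (X q.1, X' q.2) * (a (X q.1) * b (X' q.2)) ∂(P.prod Q) := by
  have haX : Integrable (fun ω => a (X ω)) P := integrable_condExp.congr ha.symm
  have hbX : Integrable (fun ω => b (X' ω)) Q := integrable_condExp.congr hb'.symm
  have hgX : AEStronglyMeasurable (fun q : Ω × Ω' => g (X q.1, X' q.2)) (P.prod Q) :=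
    (hg.comp ((hX.comp measurable_fst).prodMk (hX'.comp measurable_snd))).aestronglyMeasurable
  have hgC : ∀ᵐ q ∂(P.prod Q), ‖g (X q.1, X' q.2)‖ ≤ C := ae_of_all _ fun q => hC _
  set c : α → ℝ := fun x => ∫ ω', g (x, X' ω') * b (X' ω') ∂Q
  have hc : Measurable c := StronglyMeasurable.measurable <|
    StronglyMeasurable.integral_prod_right' (f := fun p : α × Ω' => g (p.1, X' p.2) * b (X' p.2))
      ((hg.comp (measurable_fst.prodMk (hX'.comp measurable_snd))).mul
        (hb.comp (hX'.comp measurable_snd))).stronglyMeasurable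
  have hcC : ∀ x, |c x| ≤ C * ∫ ω', |b (X' ω')| ∂Q := fun x => by
    rw [← integral_const_mul, ← Real.norm_eq_abs]
    refine norm_integral_le_of_norm_le (hbX.abs.const_mul C) (ae_of_all _ fun ω' => ?_)
    rw [Real.norm_eq_abs, abs_mul]
    exact mul_le_mul_of_nonneg_right (hC _) (abs_nonneg _)
  have hinner : ∀ x, ∫ ω', g (x, X' ω') * V ω' ∂Q = c x := fun x =>
    integral_comp_mul_eq_of_condExp hX' hV hb' (hg.comp measurable_prodMk_left) (fun _ => hC _)
  calc ∫ q, g (X q.1, X' q.2) * (U q.1 * V q.2) ∂(P.prod Q)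
      = ∫ ω, c (X ω) * U ω ∂P := by
        rw [integral_prod _ ((hU.mul_prod hV).bdd_mul hgX hgC)]
        refine integral_congr_ae (ae_of_all _ fun ω => ?_)
        simp only [mul_left_comm _ (U ω)]
        rw [integral_const_mul, hinner, mul_comm]
    _ = ∫ ω, c (X ω) * a (X ω) ∂P := integral_comp_mul_eq_of_condExp hX hU ha hc hcC
    _ = ∫ q, g (X q.1, X' q.2) * (a (X q.1) * b (X' q.2)) ∂(P.prod Q) := by
        rw [integral_prod _ ((haX.mul_prod hbX).bdd_mul hgX hgC)]
        refine integral_congr_ae (ae_of_all _ fun ω => ?_)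
        simp only [mul_left_comm _ (a (X ω))]
        rw [integral_const_mul, mul_comm]

end PullOut

theorem map_prod_eq_prod_of_indepFun {Ω β : Type*} [MeasurableSpace Ω] [MeasurableSpace β]
    {P : Measure Ω} [IsFiniteMeasure P] {Z Z₁ Z₂ : Ω → β} (h₁ : AEMeasurable Z₁ P)
    (h₂ : AEMeasurable Z₂ P) (hindep : IndepFun Z₁ Z₂ P) (hd₁ : P.map Z₁ = P.map Z)
    (hd₂ : P.map Z₂ = P.map Z) :
    P.map (fun ω => (Z₁ ω, Z₂ ω)) = (P.map Z).prod (P.map Z) := by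
  rw [(indepFun_iff_map_prod_eq_prod_map_map h₁ h₂).1 hindep, hd₁, hd₂]

theorem measureReal_label_zero_one_eq_setIntegral {Ω 𝒳 : Type*} [MeasurableSpace Ω]
    [MeasurableSpace 𝒳] {P : Measure Ω} [IsFiniteMeasure P] {X X1 X2 : Ω → 𝒳}
    {Y Y1 Y2 : Ω → ℝ} {μ0 : 𝒳 → ℝ} (hX : Measurable X) (hY : Measurable Y)
    (hY01 : ∀ ω, Y ω = 0 ∨ Y ω = 1) (hμ0 : Measurable μ0)
    (hcond : (fun ω => μ0 (X ω)) =ᵐ[P] P[Y | MeasurableSpace.comap X inferInstance])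
    (hZ : Measurable fun ω => ((X1 ω, Y1 ω), (X2 ω, Y2 ω)))
    (hlaw : P.map (fun ω => ((X1 ω, Y1 ω), (X2 ω, Y2 ω)))
      = (P.map fun ω => (X ω, Y ω)).prod (P.map fun ω => (X ω, Y ω)))
    {S : Set (𝒳 × 𝒳)} (hS : MeasurableSet S) :
    P.real {ω | (X1 ω, X2 ω) ∈ S ∧ Y1 ω = 0 ∧ Y2 ω = 1}
      = ∫ p in S, (1 - μ0 p.1) * μ0 p.2 ∂((P.map X).prod (P.map X)) := by
  have hXY : Measurable fun ω => (X ω, Y ω) := hX.prodMk hY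
  have hYint : Integrable Y P := .of_bound hY.aestronglyMeasurable 1 <| ae_of_all _ fun ω => by
    rcases hY01 ω with h | h <;> simp [h]
  have hT : MeasurableSet {z : (𝒳 × ℝ) × (𝒳 × ℝ) | (z.1.1, z.2.1) ∈ S ∧ z.1.2 = 0 ∧ z.2.2 = 1} :=
    (hS.preimage (measurable_fst.fst.prodMk measurable_snd.fst)).inter
      ((measurable_fst.snd (measurableSet_singleton 0)).inter
        (measurable_snd.snd (measurableSet_singleton 1)))
  have hT' : MeasurableSet {q : Ω × Ω | (X q.1, X q.2) ∈ S ∧ Y q.1 = 0 ∧ Y q.2 = 1} :=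
    (hXY.prodMap hXY) hT
  calc P.real {ω | (X1 ω, X2 ω) ∈ S ∧ Y1 ω = 0 ∧ Y2 ω = 1}
      = (P.prod P).real {q | (X q.1, X q.2) ∈ S ∧ Y q.1 = 0 ∧ Y q.2 = 1} := by
        have h := map_measureReal_apply hZ hT (μ := P)
        rw [hlaw, Measure.map_prod_map _ _ hXY hXY, map_measureReal_apply (hXY.prodMap hXY) hT] at h
        exact h.symm
    _ = ∫ q, S.indicator 1 (X q.1, X q.2) * ((1 - Y q.1) * Y q.2) ∂(P.prod P) := by
        rw [← integral_indicator_one hT']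
        congr 1 with q
        rcases hY01 q.1 with h1 | h1 <;> rcases hY01 q.2 with h2 | h2 <;>
          by_cases hq : (X q.1, X q.2) ∈ S <;> simp [h1, h2, hq]
    _ = ∫ q, S.indicator 1 (X q.1, X q.2) * ((1 - μ0 (X q.1)) * μ0 (X q.2)) ∂(P.prod P) :=
        integral_prod_comp_mul_mul_eq_of_condExp (U := fun ω => 1 - Y ω) (a := fun x => 1 - μ0 x)
          hX ((integrable_const 1).sub hYint)
          (one_sub_ae_eq_condExp_one_sub hX hYint hcond) hX hYint hμ0 hcond
          (measurable_one.indicator hS) (C := 1) fun p => by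
            by_cases hp : p ∈ S <;> simp [hp]
    _ = ∫ p in S, (1 - μ0 p.1) * μ0 p.2 ∂((P.map X).prod (P.map X)) := by
        rw [Measure.map_prod_map _ _ hX hX, ← integral_indicator hS,
          integral_map (hX.prodMap hX).aemeasurable]
        · congr 1 with ⟨ω, ω'⟩
          by_cases hq : (X ω, X ω') ∈ S <;> simp [hq]
        · exact (((measurable_const.sub (hμ0.comp measurable_fst)).mul
            (hμ0.comp measurable_snd)).indicator hS).aestronglyMeasurable

theorem integral_eq_half_integral_of_add_swap {α : Type*} [MeasurableSpace α] {π : Measure α}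
    [SFinite π] {φ ψ : α × α → ℝ} (hφ : Integrable φ (π.prod π))
    (h : ∀ᵐ p ∂(π.prod π), φ p + φ p.swap = ψ p) :
    ∫ p, φ p ∂(π.prod π) = 1 / 2 * ∫ p, ψ p ∂(π.prod π) := by
  calc ∫ p, φ p ∂(π.prod π)
      = 1 / 2 * (∫ p, φ p ∂(π.prod π) + ∫ p, φ p.swap ∂(π.prod π)) := by
        rw [integral_prod_swap φ]; ring
    _ = 1 / 2 * ∫ p, ψ p ∂(π.prod π) := by
        rw [← integral_add hφ (hφ.swap : Integrable (fun p => φ p.swap) _), integral_congr_ae h]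

theorem setIntegral_lt_sub_setIntegral_lt_eq {α : Type*} [MeasurableSpace α] {π : Measure α}
    [IsFiniteMeasure π] {m s : α → ℝ} (hm : Measurable m) (hm01 : ∀ x, m x ∈ Set.Icc (0 : ℝ) 1)
    (hs : Measurable s) (hmties : π.prod π {p | m p.1 = m p.2} = 0)
    (hsties : π.prod π {p | s p.1 = s p.2} = 0) :
    ∫ p in {p | m p.1 < m p.2}, (1 - m p.1) * m p.2 ∂(π.prod π)
        - ∫ p in {p | s p.1 < s p.2}, (1 - m p.1) * m p.2 ∂(π.prod π)
      = 1 / 2 * ∫ p, {p | m p.1 < m p.2 ∧ s p.2 < s p.1}.indicator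
            (fun p => m p.2 - m p.1) p ∂(π.prod π)
        + 1 / 2 * ∫ p, {p | m p.2 < m p.1 ∧ s p.1 < s p.2}.indicator
            (fun p => m p.1 - m p.2) p ∂(π.prod π) := by
  set A := {p : α × α | m p.1 < m p.2}
  set B := {p : α × α | s p.1 < s p.2}
  set w : α × α → ℝ := fun p => (1 - m p.1) * m p.2
  set φ : α × α → ℝ := fun p => A.indicator w p - B.indicator w p
  set ψ₁ := {p : α × α | m p.1 < m p.2 ∧ s p.2 < s p.1}.indicator (fun p => m p.2 - m p.1)
  set ψ₂ := {p : α × α | m p.2 < m p.1 ∧ s p.1 < s p.2}.indicator (fun p => m p.1 - m p.2)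
  have hm₁ : Measurable fun p : α × α => m p.1 := hm.comp measurable_fst
  have hm₂ : Measurable fun p : α × α => m p.2 := hm.comp measurable_snd
  have hs₁ : Measurable fun p : α × α => s p.1 := hs.comp measurable_fst
  have hs₂ : Measurable fun p : α × α => s p.2 := hs.comp measurable_snd
  have hA : MeasurableSet A := measurableSet_lt hm₁ hm₂
  have hB : MeasurableSet B := measurableSet_lt hs₁ hs₂
  have hbound : ∀ p : α × α, |(1 - m p.1) * m p.2| ≤ 1 ∧ |m p.2 - m p.1| ≤ 1 := fun p => by
    obtain ⟨⟨h₁, h₁'⟩, ⟨h₂, h₂'⟩⟩ := And.intro (hm01 p.1) (hm01 p.2)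
    refine ⟨abs_le.2 ⟨?_, ?_⟩, abs_le.2 ⟨?_, ?_⟩⟩ <;> nlinarith
  have hw : Integrable w (π.prod π) :=
    .of_bound ((measurable_const.sub hm₁).mul hm₂).aestronglyMeasurable 1
      (ae_of_all _ fun p => (hbound p).1)
  have hd : Integrable (fun p : α × α => m p.2 - m p.1) (π.prod π) :=
    .of_bound (hm₂.sub hm₁).aestronglyMeasurable 1 (ae_of_all _ fun p => (hbound p).2)
  have hψ₁ : Integrable ψ₁ (π.prod π) :=
    hd.indicator ((measurableSet_lt hm₁ hm₂).inter (measurableSet_lt hs₂ hs₁))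
  have hψ₂ : Integrable ψ₂ (π.prod π) :=
    by simpa only [ψ₂, neg_sub, Set.ofPred_and] using
      hd.fun_neg.indicator ((measurableSet_lt hm₂ hm₁).inter (measurableSet_lt hs₁ hs₂))
  have hφ : Integrable φ (π.prod π) := (hw.indicator hA).sub (hw.indicator hB)
  have hsymm : ∀ᵐ p ∂(π.prod π), φ p + φ p.swap = ψ₁ p + ψ₂ p := by
    filter_upwards [measure_eq_zero_iff_ae_notMem.1 hmties,
      measure_eq_zero_iff_ae_notMem.1 hsties] with p hmp hsp
    rcases lt_or_gt_of_ne hmp with h | h <;> rcases lt_or_gt_of_ne hsp with h' | h' <;>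
      simp [φ, ψ₁, ψ₂, A, B, w, Set.indicator_apply, h, h', h.not_gt, h'.not_gt] <;> ring
  rw [← integral_indicator hA, ← integral_indicator hB,
    ← integral_sub (hw.indicator hA) (hw.indicator hB), ← mul_add, ← integral_add hψ₁ hψ₂]
  exact integral_eq_half_integral_of_add_swap hφ hsymm

theorem map_prod_fst_eq_prod_of_map_prod_eq {Ω β γ : Type*} [MeasurableSpace Ω]
    [MeasurableSpace β] [MeasurableSpace γ] {P : Measure Ω} [IsFiniteMeasure P]
    {Z Z₁ Z₂ : Ω → β × γ} (hZ : Measurable Z) (hZ₁ : Measurable Z₁) (hZ₂ : Measurable Z₂)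
    (hlaw : P.map (fun ω => (Z₁ ω, Z₂ ω)) = (P.map Z).prod (P.map Z)) :
    P.map (fun ω => ((Z₁ ω).1, (Z₂ ω).1))
      = (P.map fun ω => (Z ω).1).prod (P.map fun ω => (Z ω).1) := by
  have h := congrArg (Measure.map (Prod.map Prod.fst Prod.fst)) hlaw
  rwa [Measure.map_map (measurable_fst.prodMap measurable_fst) (hZ₁.prodMk hZ₂),
    ← Measure.map_prod_map _ _ measurable_fst measurable_fst,
    Measure.map_map measurable_fst hZ] at h

theorem measureReal_lt_sub_measureReal_lt_eq {Ω 𝒳 : Type*} [MeasurableSpace Ω]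
    [MeasurableSpace 𝒳] {P : Measure Ω} [IsFiniteMeasure P] {X X1 X2 : Ω → 𝒳}
    {Y Y1 Y2 : Ω → ℝ} {μ0 s : 𝒳 → ℝ} (hX : Measurable X) (hY : Measurable Y)
    (hY01 : ∀ ω, Y ω = 0 ∨ Y ω = 1) (hμ0 : Measurable μ0)
    (hμ0mem : ∀ x, μ0 x ∈ Set.Icc (0 : ℝ) 1)
    (hcond : (fun ω => μ0 (X ω)) =ᵐ[P] P[Y | MeasurableSpace.comap X inferInstance])
    (hZ : Measurable fun ω => ((X1 ω, Y1 ω), (X2 ω, Y2 ω)))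
    (hlaw : P.map (fun ω => ((X1 ω, Y1 ω), (X2 ω, Y2 ω)))
      = (P.map fun ω => (X ω, Y ω)).prod (P.map fun ω => (X ω, Y ω)))
    (hs : Measurable s) (hties0 : P {ω | μ0 (X1 ω) = μ0 (X2 ω)} = 0)
    (htiess : P {ω | s (X1 ω) = s (X2 ω)} = 0) :
    P.real {ω | μ0 (X1 ω) < μ0 (X2 ω) ∧ Y1 ω = 0 ∧ Y2 ω = 1}
        - P.real {ω | s (X1 ω) < s (X2 ω) ∧ Y1 ω = 0 ∧ Y2 ω = 1}
      = 1 / 2 * ∫ ω, {ω | μ0 (X1 ω) < μ0 (X2 ω) ∧ s (X2 ω) < s (X1 ω)}.indicator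
            (fun ω => μ0 (X2 ω) - μ0 (X1 ω)) ω ∂P
        + 1 / 2 * ∫ ω, {ω | μ0 (X2 ω) < μ0 (X1 ω) ∧ s (X1 ω) < s (X2 ω)}.indicator
            (fun ω => μ0 (X1 ω) - μ0 (X2 ω)) ω ∂P := by
  have hX₁₂ : Measurable fun ω => (X1 ω, X2 ω) := hZ.fst.fst.prodMk hZ.snd.fst
  have hlawX : P.map (fun ω => (X1 ω, X2 ω)) = (P.map X).prod (P.map X) :=
    map_prod_fst_eq_prod_of_map_prod_eq (hX.prodMk hY) hZ.fst hZ.snd hlaw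
  have hties : ∀ g : 𝒳 → ℝ, Measurable g → P {ω | g (X1 ω) = g (X2 ω)} = 0 →
      (P.map X).prod (P.map X) {p | g p.1 = g p.2} = 0 := fun g hg h => by
    rwa [← hlawX, Measure.map_apply hX₁₂ (s := {p | g p.1 = g p.2})
      (measurableSet_eq_fun (hg.comp measurable_fst) (hg.comp measurable_snd))]
  have htransfer : ∀ ψ : 𝒳 × 𝒳 → ℝ, Measurable ψ →
      ∫ p, ψ p ∂((P.map X).prod (P.map X)) = ∫ ω, ψ (X1 ω, X2 ω) ∂P := fun ψ hψ => by
    rw [← hlawX]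
    exact integral_map hX₁₂.aemeasurable hψ.aestronglyMeasurable
  have hlt : ∀ g : 𝒳 → ℝ, Measurable g → MeasurableSet {p : 𝒳 × 𝒳 | g p.1 < g p.2} :=
    fun g hg => measurableSet_lt (hg.comp measurable_fst) (hg.comp measurable_snd)
  have h := setIntegral_lt_sub_setIntegral_lt_eq hμ0 hμ0mem hs (hties μ0 hμ0 hties0)
    (hties s hs htiess)
  rwa [← measureReal_label_zero_one_eq_setIntegral hX hY hY01 hμ0 hcond hZ hlaw (hlt μ0 hμ0),
    ← measureReal_label_zero_one_eq_setIntegral hX hY hY01 hμ0 hcond hZ hlaw (hlt s hs),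
    htransfer _ (by measurability), htransfer _ (by measurability)] at h

/-- With `(X1, Y1)` and `(X2, Y2)` independent copies of `(X, Y)` and no ties for `μ0` or `f`,
the difference of the two (unnormalized) AUC numerators equals the stated indicator expectation,
is nonnegative, and consequently `μ0` maximizes the AUC. -/
theorem stmt12 {Ω 𝒳 : Type*} [MeasurableSpace Ω] [MeasurableSpace 𝒳]
    (P : Measure Ω) [IsProbabilityMeasure P]
    (X X1 X2 : Ω → 𝒳) (hX : Measurable X) (hX1 : Measurable X1) (hX2 : Measurable X2)
    (Y Y1 Y2 : Ω → ℝ) (hY : Measurable Y) (hY1 : Measurable Y1) (hY2 : Measurable Y2)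
    (hY01 : ∀ ω, Y ω = 0 ∨ Y ω = 1)
    (μ0 : 𝒳 → ℝ) (hμ0 : Measurable μ0) (hμ0mem : ∀ x, μ0 x ∈ Set.Icc (0 : ℝ) 1)
    (hcond : (fun ω => μ0 (X ω)) =ᵐ[P] P[Y | MeasurableSpace.comap X inferInstance])
    (hindep : IndepFun (fun ω => (X1 ω, Y1 ω)) (fun ω => (X2 ω, Y2 ω)) P)
    (hd1 : Measure.map (fun ω => (X1 ω, Y1 ω)) P = Measure.map (fun ω => (X ω, Y ω)) P)
    (hd2 : Measure.map (fun ω => (X2 ω, Y2 ω)) P = Measure.map (fun ω => (X ω, Y ω)) P)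
    (f : 𝒳 → ℝ) (hf : Measurable f)
    (hties0 : P {ω | μ0 (X1 ω) = μ0 (X2 ω)} = 0)
    (htiesf : P {ω | f (X1 ω) = f (X2 ω)} = 0) :
    ((P {ω | μ0 (X1 ω) < μ0 (X2 ω) ∧ Y1 ω = 0 ∧ Y2 ω = 1}).toReal
        - (P {ω | f (X1 ω) < f (X2 ω) ∧ Y1 ω = 0 ∧ Y2 ω = 1}).toReal
      = (1 / 2) * (∫ ω, Set.indicator {ω | μ0 (X1 ω) < μ0 (X2 ω) ∧ f (X2 ω) < f (X1 ω)}
            (fun ω => μ0 (X2 ω) - μ0 (X1 ω)) ω ∂P)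
        + (1 / 2) * (∫ ω, Set.indicator {ω | μ0 (X2 ω) < μ0 (X1 ω) ∧ f (X1 ω) < f (X2 ω)}
            (fun ω => μ0 (X1 ω) - μ0 (X2 ω)) ω ∂P)) ∧
    (0 ≤ (P {ω | μ0 (X1 ω) < μ0 (X2 ω) ∧ Y1 ω = 0 ∧ Y2 ω = 1}).toReal
        - (P {ω | f (X1 ω) < f (X2 ω) ∧ Y1 ω = 0 ∧ Y2 ω = 1}).toReal) ∧
    (0 < P {ω | Y ω = 1} → P {ω | Y ω = 1} < 1 →
      P[|{ω | Y1 ω = 0 ∧ Y2 ω = 1}] {ω | f (X1 ω) < f (X2 ω)}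
        ≤ P[|{ω | Y1 ω = 0 ∧ Y2 ω = 1}] {ω | μ0 (X1 ω) < μ0 (X2 ω)}) := by
  have hidentity := measureReal_lt_sub_measureReal_lt_eq hX hY hY01 hμ0 hμ0mem hcond
    ((hX1.prodMk hY1).prodMk (hX2.prodMk hY2))
    (map_prod_eq_prod_of_indepFun (hX1.prodMk hY1).aemeasurable (hX2.prodMk hY2).aemeasurable
      hindep hd1 hd2) hf hties0 htiesf
  have hnonneg := LE.le.trans_eq (add_nonneg
      (mul_nonneg one_half_pos.le (integral_nonneg fun ω => Set.indicator_nonneg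
        (fun ω (hω : μ0 (X1 ω) < μ0 (X2 ω) ∧ _) => sub_nonneg.2 hω.1.le) ω))
      (mul_nonneg one_half_pos.le (integral_nonneg fun ω => Set.indicator_nonneg
        (fun ω (hω : μ0 (X2 ω) < μ0 (X1 ω) ∧ _) => sub_nonneg.2 hω.1.le) ω)))
    hidentity.symm
  refine ⟨hidentity, hnonneg, fun _ _ => ?_⟩
  have hB : MeasurableSet {ω | Y1 ω = 0 ∧ Y2 ω = 1} :=
    (hY1 (measurableSet_singleton 0)).inter (hY2 (measurableSet_singleton 1))
  rw [cond_apply hB, cond_apply hB, Set.inter_comm, Set.inter_comm _ {ω | μ0 (X1 ω) < μ0 (X2 ω)}]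
  refine mul_le_mul_right ?_ _
  exact (ENNReal.toReal_le_toReal (measure_ne_top _ _) (measure_ne_top _ _)).1
    (sub_nonneg.1 hnonneg)
end

section
/- Let f : 𝒳 → ℝ be measurable and assume that P( μ_0(X_1) = μ_0(X_2) ) = 0 and P( f(X_1) = f(X_2) ) = 0. Then 0 ≤ P{ μ_0(X_1) < μ_0(X_2), Y_1 = 0, Y_2 = 1 } − P{ f(X_1) < f(X_2), Y_1 = 0, Y_2 = 1 } ≤ (1/2) E[ |μ_0(X_1) − μ_0(X_2)| · 1{ (μ_0(X_1) − μ_0(X_2)) (f(X_1) − f(X_2)) < 0 } ]. -/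
/-!
Write `ρ` for the law of `X`. Because `μ0 ∘ X` is the conditional expectation of the indicator
of `{Y = 1}`, the laws of `X` restricted to `{Y = 1}` and to `{Y = 0}` have densities `μ0` and
`1 - μ0` with respect to `ρ`. By independence, for every measurable score `g`,
`P{g(X1) < g(X2), Y1 = 0, Y2 = 1} = ∫_{g x₁ < g x₂} (1 - μ0 x₁) μ0 x₂ d(ρ ⊗ ρ)`.
Subtract the identities for `g = μ0` and `g = f` and symmetrise under `(x₁, x₂) ↦ (x₂, x₁)`:
away from ties (a null set) the symmetrised integrand is `|μ0 x₁ - μ0 x₂|` where `μ0` and `f`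
order the pair oppositely and `0` elsewhere. So the difference is exactly half the expectation
on the right, and in particular nonnegative.
-/

open MeasureTheory ProbabilityTheory

theorem condExp_indicator_compl_one {Ω : Type*} {m m₀ : MeasurableSpace Ω} {P : Measure[m₀] Ω}
    [IsFiniteMeasure P] (hm : m ≤ m₀) {s : Set Ω} (hs : MeasurableSet[m₀] s) :
    P[sᶜ.indicator 1 | m] =ᵐ[P] fun ω => 1 - P[s.indicator (1 : Ω → ℝ) | m] ω := by
  have h := condExp_sub (m := m) (integrable_const (μ := P) (1 : ℝ))
    ((integrable_const (1 : ℝ)).indicator hs)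
  rw [condExp_const hm] at h
  rwa [Set.indicator_compl]

theorem eq_indicator_preimage_one {Ω : Type*} {Y : Ω → ℝ} (hY01 : ∀ ω, Y ω = 0 ∨ Y ω = 1) :
    Y = (Y ⁻¹' {1}).indicator 1 := by
  ext ω; rcases hY01 ω with h | h <;> simp [h]

theorem preimage_zero_eq_compl_preimage_one {Ω : Type*} {Y : Ω → ℝ}
    (hY01 : ∀ ω, Y ω = 0 ∨ Y ω = 1) :
    Y ⁻¹' {0} = (Y ⁻¹' {1})ᶜ := by
  ext ω; rcases hY01 ω with h | h <;> simp [h]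

section

variable {Ω 𝒳 : Type*} [MeasurableSpace Ω] [MeasurableSpace 𝒳] {P : Measure Ω}

theorem map_restrict_eq_withDensity [IsFiniteMeasure P] {X : Ω → 𝒳} {S : Set Ω} {p : 𝒳 → ℝ}
    (hX : Measurable X) (hS : MeasurableSet S) (hp : Measurable p) (hp_nonneg : ∀ x, 0 ≤ p x)
    (hcond : (fun ω => p (X ω)) =ᵐ[P] P[S.indicator 1 | MeasurableSpace.comap X inferInstance]) :
    (P.restrict S).map X = (P.map X).withDensity (fun x => ENNReal.ofReal (p x)) := by
  ext A hA
  have hXA : MeasurableSet[MeasurableSpace.comap X inferInstance] (X ⁻¹' A) := ⟨A, hA, rfl⟩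
  have hint : ∫ ω in X ⁻¹' A, p (X ω) ∂P = P.real (S ∩ X ⁻¹' A) := by
    rw [setIntegral_congr_ae (hX hA) (hcond.mono fun ω h _ => h),
      setIntegral_condExp hX.comap_le ((integrable_const 1).indicator hS) hXA,
      integral_indicator_one hS, measureReal_restrict_apply hS]
  rw [Measure.map_apply hX hA, Measure.restrict_apply (hX hA), withDensity_apply _ hA,
    setLIntegral_map hA hp.ennreal_ofReal hX, ← ofReal_integral_eq_lintegral_ofReal, hint,
    ofReal_measureReal, Set.inter_comm]
  · exact (integrable_condExp.congr hcond.symm).restrict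
  · exact .of_forall fun ω => hp_nonneg _

theorem map_restrict_preimage_one_eq_withDensity [IsFiniteMeasure P] {X : Ω → 𝒳} {Y : Ω → ℝ}
    {μ0 : 𝒳 → ℝ} (hX : Measurable X) (hY : Measurable Y) (hY01 : ∀ ω, Y ω = 0 ∨ Y ω = 1)
    (hμ0 : Measurable μ0) (hμ0mem : ∀ x, μ0 x ∈ Set.Icc (0 : ℝ) 1)
    (hcond : (fun ω => μ0 (X ω)) =ᵐ[P] P[Y | MeasurableSpace.comap X inferInstance]) :
    (P.restrict (Y ⁻¹' {1})).map X = (P.map X).withDensity fun x => ENNReal.ofReal (μ0 x) := by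
  rw [eq_indicator_preimage_one hY01] at hcond
  exact map_restrict_eq_withDensity hX (hY (measurableSet_singleton 1)) hμ0
    (fun x => (hμ0mem x).1) hcond

theorem map_restrict_preimage_zero_eq_withDensity [IsFiniteMeasure P] {X : Ω → 𝒳} {Y : Ω → ℝ}
    {μ0 : 𝒳 → ℝ} (hX : Measurable X) (hY : Measurable Y) (hY01 : ∀ ω, Y ω = 0 ∨ Y ω = 1)
    (hμ0 : Measurable μ0) (hμ0mem : ∀ x, μ0 x ∈ Set.Icc (0 : ℝ) 1)
    (hcond : (fun ω => μ0 (X ω)) =ᵐ[P] P[Y | MeasurableSpace.comap X inferInstance]) :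
    (P.restrict (Y ⁻¹' {0})).map X =
      (P.map X).withDensity fun x => ENNReal.ofReal (1 - μ0 x) := by
  have hS : MeasurableSet (Y ⁻¹' {1}) := hY (measurableSet_singleton 1)
  rw [eq_indicator_preimage_one hY01] at hcond
  rw [preimage_zero_eq_compl_preimage_one hY01]
  refine map_restrict_eq_withDensity hX hS.compl (measurable_const.sub hμ0)
    (fun x => sub_nonneg.2 (hμ0mem x).2) ?_
  filter_upwards [hcond, condExp_indicator_compl_one hX.comap_le hS] with ω h₁ h₂
  rw [h₂, h₁]

end

section

variable {α β : Type*} [MeasurableSpace α] [MeasurableSpace β]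

theorem prod_apply_eq_prod_map_fst_restrict (ν₁ ν₂ : Measure (α × β)) [SFinite ν₁] [SFinite ν₂]
    {T : Set (α × α)} (hT : MeasurableSet T) (s t : Set β) :
    (ν₁.prod ν₂) {z | (z.1.1, z.2.1) ∈ T ∧ z.1.2 ∈ s ∧ z.2.2 ∈ t} =
      (((ν₁.restrict (Prod.snd ⁻¹' s)).map Prod.fst).prod
        ((ν₂.restrict (Prod.snd ⁻¹' t)).map Prod.fst)) T := by
  rw [Measure.map_prod_map _ _ measurable_fst measurable_fst,
    Measure.map_apply (measurable_fst.prodMap measurable_fst) hT, Measure.prod_restrict,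
    Measure.restrict_apply ((measurable_fst.prodMap measurable_fst) hT)]
  rfl

theorem toReal_prod_withDensity_ofReal_apply (ρ₁ : Measure α) (ρ₂ : Measure β)
    [SFinite ρ₁] [SFinite ρ₂] {p : α → ℝ} {q : β → ℝ} (hp : Measurable p) (hq : Measurable q)
    (hp_nonneg : ∀ x, 0 ≤ p x) (hq_nonneg : ∀ y, 0 ≤ q y) {T : Set (α × β)}
    (hT : MeasurableSet T) :
    (((ρ₁.withDensity fun x => ENNReal.ofReal (p x)).prod
        (ρ₂.withDensity fun y => ENNReal.ofReal (q y))) T).toReal =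
      ∫ z in T, p z.1 * q z.2 ∂(ρ₁.prod ρ₂) := by
  rw [prod_withDensity hp.ennreal_ofReal hq.ennreal_ofReal, withDensity_apply _ hT,
    integral_eq_lintegral_of_nonneg_ae]
  · simp_rw [ENNReal.ofReal_mul (hp_nonneg _)]
  · exact .of_forall fun z => mul_nonneg (hp_nonneg _) (hq_nonneg _)
  · exact ((hp.comp measurable_fst).mul (hq.comp measurable_snd)).aestronglyMeasurable

end

theorem ite_lt_sub_ite_lt_add_swap {a₁ a₂ b₁ b₂ : ℝ} (ha : a₁ ≠ a₂) (hb : b₁ ≠ b₂) :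
    ((if a₁ < a₂ then (1 - a₁) * a₂ else 0) - (if b₁ < b₂ then (1 - a₁) * a₂ else 0)) +
      ((if a₂ < a₁ then (1 - a₂) * a₁ else 0) - (if b₂ < b₁ then (1 - a₂) * a₁ else 0)) =
      if (a₁ - a₂) * (b₁ - b₂) < 0 then |a₁ - a₂| else 0 := by
  rcases ha.lt_or_gt with ha | ha <;> rcases hb.lt_or_gt with hb | hb <;>
    simp [ha, hb, ha.not_gt, hb.not_gt, mul_neg_iff, abs_of_neg, abs_of_pos] <;> ring

theorem setIntegral_lt_sub_setIntegral_lt_eq_half_integral {𝒳 : Type*} [MeasurableSpace 𝒳]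
    {ρ : Measure 𝒳} [IsFiniteMeasure ρ] {a b : 𝒳 → ℝ} (ha : Measurable a) (hb : Measurable b)
    (ha01 : ∀ x, a x ∈ Set.Icc 0 1) (hta : ∀ᵐ z ∂ρ.prod ρ, a z.1 ≠ a z.2)
    (htb : ∀ᵐ z ∂ρ.prod ρ, b z.1 ≠ b z.2) :
    ∫ z in {z | a z.1 < a z.2}, (1 - a z.1) * a z.2 ∂ρ.prod ρ -
        ∫ z in {z | b z.1 < b z.2}, (1 - a z.1) * a z.2 ∂ρ.prod ρ =
      1 / 2 * ∫ z, {z | (a z.1 - a z.2) * (b z.1 - b z.2) < 0}.indicator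
        (fun z => |a z.1 - a z.2|) z ∂ρ.prod ρ := by
  set w : 𝒳 × 𝒳 → ℝ := fun z => (1 - a z.1) * a z.2
  set φ : 𝒳 × 𝒳 → ℝ := fun z =>
    {z | a z.1 < a z.2}.indicator w z - {z | b z.1 < b z.2}.indicator w z
  have hTa : MeasurableSet {z : 𝒳 × 𝒳 | a z.1 < a z.2} :=
    measurableSet_lt (ha.comp measurable_fst) (ha.comp measurable_snd)
  have hTb : MeasurableSet {z : 𝒳 × 𝒳 | b z.1 < b z.2} :=
    measurableSet_lt (hb.comp measurable_fst) (hb.comp measurable_snd)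
  have hw : Integrable w (ρ.prod ρ) := by
    refine .of_bound (by fun_prop) 1 (.of_forall fun z => ?_)
    obtain ⟨h₁, h₁'⟩ := ha01 z.1
    obtain ⟨h₂, h₂'⟩ := ha01 z.2
    rw [Real.norm_eq_abs, abs_le]
    constructor <;> nlinarith
  have hφ : Integrable φ (ρ.prod ρ) := (hw.indicator hTa).sub (hw.indicator hTb)
  have hsymm : (fun z => φ z + φ z.swap) =ᵐ[ρ.prod ρ]
      {z | (a z.1 - a z.2) * (b z.1 - b z.2) < 0}.indicator (fun z => |a z.1 - a z.2|) := by
    filter_upwards [hta, htb] with z hza hzb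
    simpa only [φ, w, Set.indicator_apply, Set.mem_ofPred_eq, Prod.fst_swap, Prod.snd_swap]
      using ite_lt_sub_ite_lt_add_swap hza hzb
  calc _ = ∫ z, φ z ∂ρ.prod ρ := by
        rw [integral_sub (hw.indicator hTa) (hw.indicator hTb), integral_indicator hTa,
          integral_indicator hTb]
    _ = 1 / 2 * (∫ z, φ z ∂ρ.prod ρ + ∫ z, φ z.swap ∂ρ.prod ρ) := by
        rw [integral_prod_swap]; ring
    _ = _ := by rw [← integral_add hφ (hφ.swap : Integrable (fun z => φ z.swap) _),
          integral_congr_ae hsymm]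

section

variable {Ω 𝒳 : Type*} [MeasurableSpace Ω] [MeasurableSpace 𝒳] {P : Measure Ω}

theorem measure_pair_mem_eq_prod_map_restrict {β : Type*} [MeasurableSpace β] [IsFiniteMeasure P]
    {X X1 X2 : Ω → 𝒳} {Y Y1 Y2 : Ω → β} (hX : Measurable X) (hX1 : Measurable X1)
    (hX2 : Measurable X2) (hY : Measurable Y) (hY1 : Measurable Y1) (hY2 : Measurable Y2)
    (hindep : IndepFun (fun ω => (X1 ω, Y1 ω)) (fun ω => (X2 ω, Y2 ω)) P)
    (hd1 : P.map (fun ω => (X1 ω, Y1 ω)) = P.map (fun ω => (X ω, Y ω)))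
    (hd2 : P.map (fun ω => (X2 ω, Y2 ω)) = P.map (fun ω => (X ω, Y ω)))
    {T : Set (𝒳 × 𝒳)} (hT : MeasurableSet T) {s t : Set β} (hs : MeasurableSet s)
    (ht : MeasurableSet t) :
    P {ω | (X1 ω, X2 ω) ∈ T ∧ Y1 ω ∈ s ∧ Y2 ω ∈ t} =
      (((P.restrict (Y ⁻¹' s)).map X).prod ((P.restrict (Y ⁻¹' t)).map X)) T := by
  set ν := P.map fun ω => (X ω, Y ω)
  have hlaw : P.map (fun ω => ((X1 ω, Y1 ω), (X2 ω, Y2 ω))) = ν.prod ν := by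
    rw [(indepFun_iff_map_prod_eq_prod_map_map (hX1.prodMk hY1).aemeasurable
      (hX2.prodMk hY2).aemeasurable).mp hindep, hd1, hd2]
  have hmarg : ∀ u, MeasurableSet u →
      (ν.restrict (Prod.snd ⁻¹' u)).map Prod.fst = (P.restrict (Y ⁻¹' u)).map X := by
    intro u hu
    rw [Measure.restrict_map (hX.prodMk hY) (measurable_snd hu),
      Measure.map_map measurable_fst (hX.prodMk hY)]
    rfl
  have hE : MeasurableSet
      {z : (𝒳 × β) × (𝒳 × β) | (z.1.1, z.2.1) ∈ T ∧ z.1.2 ∈ s ∧ z.2.2 ∈ t} :=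
    ((measurable_fst.fst.prodMk measurable_snd.fst) hT).inter
      ((measurable_fst.snd hs).inter (measurable_snd.snd ht))
  rw [← hmarg s hs, ← hmarg t ht, ← prod_apply_eq_prod_map_fst_restrict _ _ hT, ← hlaw,
    Measure.map_apply ((hX1.prodMk hY1).prodMk (hX2.prodMk hY2)) hE]
  rfl

theorem map_prodMk_eq_prod_of_indepFun {β : Type*} [MeasurableSpace β] [IsFiniteMeasure P]
    {X X1 X2 : Ω → 𝒳} {Y Y1 Y2 : Ω → β} (hX : Measurable X) (hX1 : Measurable X1)
    (hX2 : Measurable X2) (hY : Measurable Y) (hY1 : Measurable Y1) (hY2 : Measurable Y2)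
    (hindep : IndepFun (fun ω => (X1 ω, Y1 ω)) (fun ω => (X2 ω, Y2 ω)) P)
    (hd1 : P.map (fun ω => (X1 ω, Y1 ω)) = P.map (fun ω => (X ω, Y ω)))
    (hd2 : P.map (fun ω => (X2 ω, Y2 ω)) = P.map (fun ω => (X ω, Y ω))) :
    P.map (fun ω => (X1 ω, X2 ω)) = (P.map X).prod (P.map X) := by
  have hmarg : ∀ {X' : Ω → 𝒳} {Y' : Ω → β}, Measurable X' → Measurable Y' →
      P.map (fun ω => (X' ω, Y' ω)) = P.map (fun ω => (X ω, Y ω)) → P.map X' = P.map X :=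
    fun hX' hY' hd => (IdentDistrib.comp ⟨(hX'.prodMk hY').aemeasurable,
      (hX.prodMk hY).aemeasurable, hd⟩ measurable_fst).map_eq
  rw [(indepFun_iff_map_prod_eq_prod_map_map hX1.aemeasurable hX2.aemeasurable).mp
    (hindep.comp measurable_fst measurable_fst), hmarg hX1 hY1 hd1, hmarg hX2 hY2 hd2]

theorem toReal_measure_lt_and_eq_zero_and_eq_one [IsFiniteMeasure P] {X X1 X2 : Ω → 𝒳}
    {Y Y1 Y2 : Ω → ℝ} (hX : Measurable X) (hX1 : Measurable X1) (hX2 : Measurable X2)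
    (hY : Measurable Y) (hY1 : Measurable Y1) (hY2 : Measurable Y2)
    (hY01 : ∀ ω, Y ω = 0 ∨ Y ω = 1) {μ0 : 𝒳 → ℝ} (hμ0 : Measurable μ0)
    (hμ0mem : ∀ x, μ0 x ∈ Set.Icc (0 : ℝ) 1)
    (hcond : (fun ω => μ0 (X ω)) =ᵐ[P] P[Y | MeasurableSpace.comap X inferInstance])
    (hindep : IndepFun (fun ω => (X1 ω, Y1 ω)) (fun ω => (X2 ω, Y2 ω)) P)
    (hd1 : P.map (fun ω => (X1 ω, Y1 ω)) = P.map (fun ω => (X ω, Y ω)))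
    (hd2 : P.map (fun ω => (X2 ω, Y2 ω)) = P.map (fun ω => (X ω, Y ω)))
    {g : 𝒳 → ℝ} (hg : Measurable g) :
    (P {ω | g (X1 ω) < g (X2 ω) ∧ Y1 ω = 0 ∧ Y2 ω = 1}).toReal =
      ∫ z in {z | g z.1 < g z.2}, (1 - μ0 z.1) * μ0 z.2 ∂(P.map X).prod (P.map X) := by
  have hT : MeasurableSet {z : 𝒳 × 𝒳 | g z.1 < g z.2} :=
    measurableSet_lt (hg.comp measurable_fst) (hg.comp measurable_snd)
  have h := measure_pair_mem_eq_prod_map_restrict hX hX1 hX2 hY hY1 hY2 hindep hd1 hd2 hT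
    (measurableSet_singleton 0) (measurableSet_singleton 1)
  rw [map_restrict_preimage_zero_eq_withDensity hX hY hY01 hμ0 hμ0mem hcond,
    map_restrict_preimage_one_eq_withDensity hX hY hY01 hμ0 hμ0mem hcond] at h
  rw [← toReal_prod_withDensity_ofReal_apply (p := fun x => 1 - μ0 x) _ _
    (measurable_const.sub hμ0) hμ0 (fun x => sub_nonneg.2 (hμ0mem x).2)
    (fun x => (hμ0mem x).1) hT, ← h]
  rfl

theorem ae_map_prodMk_ne_of_measure_eq_zero {X1 X2 : Ω → 𝒳} (hX1 : Measurable X1)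
    (hX2 : Measurable X2) {g : 𝒳 → ℝ} (hg : Measurable g)
    (hties : P {ω | g (X1 ω) = g (X2 ω)} = 0) :
    ∀ᵐ z ∂P.map (fun ω => (X1 ω, X2 ω)), g z.1 ≠ g z.2 := by
  have hne : MeasurableSet {z : 𝒳 × 𝒳 | g z.1 ≠ g z.2} :=
    (measurableSet_eq_fun (hg.comp measurable_fst) (hg.comp measurable_snd)).compl
  rw [ae_map_iff (hX1.prodMk hX2).aemeasurable hne]
  exact measure_eq_zero_iff_ae_notMem.mp hties

end

/-- With `(X1, Y1)` and `(X2, Y2)` independent copies of `(X, Y)` and no ties for `μ0` or `f`,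
`0 ≤ P{μ0(X1) < μ0(X2), Y1 = 0, Y2 = 1} − P{f(X1) < f(X2), Y1 = 0, Y2 = 1}
   ≤ (1/2) E[|μ0(X1) − μ0(X2)| · 1{(μ0(X1) − μ0(X2))(f(X1) − f(X2)) < 0}]`. -/
theorem stmt13 {Ω 𝒳 : Type*} [MeasurableSpace Ω] [MeasurableSpace 𝒳]
    (P : Measure Ω) [IsProbabilityMeasure P]
    (X X1 X2 : Ω → 𝒳) (hX : Measurable X) (hX1 : Measurable X1) (hX2 : Measurable X2)
    (Y Y1 Y2 : Ω → ℝ) (hY : Measurable Y) (hY1 : Measurable Y1) (hY2 : Measurable Y2)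
    (hY01 : ∀ ω, Y ω = 0 ∨ Y ω = 1)
    (μ0 : 𝒳 → ℝ) (hμ0 : Measurable μ0) (hμ0mem : ∀ x, μ0 x ∈ Set.Icc (0 : ℝ) 1)
    (hcond : (fun ω => μ0 (X ω)) =ᵐ[P] P[Y | MeasurableSpace.comap X inferInstance])
    (hindep : IndepFun (fun ω => (X1 ω, Y1 ω)) (fun ω => (X2 ω, Y2 ω)) P)
    (hd1 : Measure.map (fun ω => (X1 ω, Y1 ω)) P = Measure.map (fun ω => (X ω, Y ω)) P)
    (hd2 : Measure.map (fun ω => (X2 ω, Y2 ω)) P = Measure.map (fun ω => (X ω, Y ω)) P)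
    (f : 𝒳 → ℝ) (hf : Measurable f)
    (hties0 : P {ω | μ0 (X1 ω) = μ0 (X2 ω)} = 0)
    (htiesf : P {ω | f (X1 ω) = f (X2 ω)} = 0) :
    0 ≤ (P {ω | μ0 (X1 ω) < μ0 (X2 ω) ∧ Y1 ω = 0 ∧ Y2 ω = 1}).toReal
        - (P {ω | f (X1 ω) < f (X2 ω) ∧ Y1 ω = 0 ∧ Y2 ω = 1}).toReal ∧
    (P {ω | μ0 (X1 ω) < μ0 (X2 ω) ∧ Y1 ω = 0 ∧ Y2 ω = 1}).toReal
        - (P {ω | f (X1 ω) < f (X2 ω) ∧ Y1 ω = 0 ∧ Y2 ω = 1}).toReal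
      ≤ (1 / 2) * ∫ ω, Set.indicator
          {ω | (μ0 (X1 ω) - μ0 (X2 ω)) * (f (X1 ω) - f (X2 ω)) < 0}
          (fun ω => |μ0 (X1 ω) - μ0 (X2 ω)|) ω ∂P := by
  have hlaw := map_prodMk_eq_prod_of_indepFun hX hX1 hX2 hY hY1 hY2 hindep hd1 hd2
  have hdiscordant : Measurable
      ({z : 𝒳 × 𝒳 | (μ0 z.1 - μ0 z.2) * (f z.1 - f z.2) < 0}.indicator
        fun z => |μ0 z.1 - μ0 z.2|) :=
    (by fun_prop : Measurable fun z : 𝒳 × 𝒳 => μ0 z.1 - μ0 z.2).abs.indicator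
      (measurableSet_lt (by fun_prop) measurable_const)
  have hrhs := integral_map (μ := P) (hX1.prodMk hX2).aemeasurable
    hdiscordant.aestronglyMeasurable
  rw [hlaw] at hrhs
  have hties0' := ae_map_prodMk_ne_of_measure_eq_zero hX1 hX2 hμ0 hties0
  have htiesf' := ae_map_prodMk_ne_of_measure_eq_zero hX1 hX2 hf htiesf
  rw [hlaw] at hties0' htiesf'
  rw [toReal_measure_lt_and_eq_zero_and_eq_one hX hX1 hX2 hY hY1 hY2 hY01 hμ0 hμ0mem hcond
      hindep hd1 hd2 hμ0,
    toReal_measure_lt_and_eq_zero_and_eq_one hX hX1 hX2 hY hY1 hY2 hY01 hμ0 hμ0mem hcond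
      hindep hd1 hd2 hf,
    setIntegral_lt_sub_setIntegral_lt_eq_half_integral hμ0 hf hμ0mem hties0' htiesf', hrhs]
  refine ⟨mul_nonneg (by norm_num) (integral_nonneg fun ω => ?_), le_rfl⟩
  exact Set.indicator_nonneg (fun _ _ => abs_nonneg _) _
end

section
/- Let A : Ω → {0,1} be measurable and Y_1 : Ω → ℝ integrable, and assume that A and Y_1 are conditionally independent given σ(X). Let g : 𝒳 → (0,1] be measurable such that g ∘ X is a version of the conditional expectation E[A ∣ σ(X)], with g(X) > 0 almost surely, and assume E| Y_1 / g(X) | < ∞. Then for every bounded measurable h : 𝒳 → ℝ, E[ h(X) Y_1 ] = E[ h(X) · (A / g(X)) · Y_1 ]; since A Y_1 equals A times the observed outcome Y := A Y_1 + (1 − A) Y_0 for any Y_0, the counterfactual mean E[ h(X) Y_1 ] is identified by the inverse-probability-weighted observed-data functional E[ h(X) A Y / g(X) ]. -/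
/-!
Conditionally on `σ(X)`, independence of `A` and `Y1` factors `E[A Y1 | X] = E[A | X] E[Y1 | X]`,
which is `g(X) E[Y1 | X]`. Pulling the `σ(X)`-measurable weight `h(X) / g(X)` out of the
conditional expectation, the propensity cancels and the tower property gives
`E[h(X) (A / g(X)) Y1] = E[h(X) E[Y1 | X]] = E[h(X) Y1]`. On `{A = 1}` the observed outcome is `Y1`
and on `{A = 0}` the integrand vanishes, which gives the second identity.
-/

open MeasureTheory ProbabilityTheory

namespace ProbabilityTheory

variable {Ω : Type*} {m mΩ : MeasurableSpace Ω} [StandardBorelSpace Ω] {hm : m ≤ mΩ}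
  {μ : Measure Ω} [IsFiniteMeasure μ]

theorem CondIndepFun.ae_indepFun_condExpKernel {β γ : Type*} {mβ : MeasurableSpace β}
    {mγ : MeasurableSpace γ} [MeasurableSpace.CountablyGenerated β]
    [MeasurableSpace.CountablyGenerated γ] {f : Ω → β} {g : Ω → γ} (hf : Measurable f)
    (hg : Measurable g) (hfg : CondIndepFun m hm f g μ) :
    ∀ᵐ ω ∂μ, IndepFun f g (condExpKernel μ m ω) := by
  rw [condIndepFun_iff_map_prod_eq_prod_map_map hf hg] at hfg
  filter_upwards [ae_of_ae_trim hm hfg] with ω hω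
  rw [indepFun_iff_map_prod_eq_prod_map_map hf.aemeasurable hg.aemeasurable]
  simpa [Kernel.map_apply _ (hf.prodMk hg), Kernel.prod_apply, Kernel.map_apply _ hf,
    Kernel.map_apply _ hg] using hω

theorem CondIndepFun.condExp_mul_ae_eq_mul_condExp {f g : Ω → ℝ} (hf : Measurable f)
    (hg : Measurable g) (hfi : Integrable f μ) (hgi : Integrable g μ)
    (hfgi : Integrable (f * g) μ) (hfg : CondIndepFun m hm f g μ) :
    μ[f * g | m] =ᵐ[μ] μ[f | m] * μ[g | m] := by
  filter_upwards [condExp_ae_eq_integral_condExpKernel hm hfgi,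
    condExp_ae_eq_integral_condExpKernel hm hfi, condExp_ae_eq_integral_condExpKernel hm hgi,
    hfg.ae_indepFun_condExpKernel hf hg] with ω hfgω hfω hgω hindep
  rw [hfgω, Pi.mul_apply, hfω, hgω]
  exact hindep.integral_mul_eq_mul_integral hf.aestronglyMeasurable hg.aestronglyMeasurable

end ProbabilityTheory

namespace MeasureTheory

variable {Ω : Type*} {m mΩ : MeasurableSpace Ω} {μ : Measure Ω}

theorem integral_mul_condExp_of_stronglyMeasurable (hm : m ≤ mΩ) [SigmaFinite (μ.trim hm)]
    {φ f : Ω → ℝ} (hφ : StronglyMeasurable[m] φ) (hφf : Integrable (φ * f) μ) (hf : Integrable f μ) :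
    ∫ ω, (φ * μ[f | m]) ω ∂μ = ∫ ω, (φ * f) ω ∂μ := by
  rw [← integral_condExp hm (f := φ * f)]
  exact integral_congr_ae (condExp_mul_of_stronglyMeasurable_left hφ hφf hf).symm

theorem integral_div_mul_eq_integral_mul_of_condExp_mul_ae_eq (hm : m ≤ mΩ)
    [SigmaFinite (μ.trim hm)] {ψ e A Y : Ω → ℝ}
    (hψ : StronglyMeasurable[m] ψ) (he : StronglyMeasurable[m] e) (he0 : ∀ᵐ ω ∂μ, e ω ≠ 0)
    (hY : Integrable Y μ) (hAY : Integrable (A * Y) μ) (hψY : Integrable (ψ * Y) μ)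
    (hweighted : Integrable (ψ / e * (A * Y)) μ) (hcond : μ[A * Y | m] =ᵐ[μ] e * μ[Y | m]) :
    ∫ ω, (ψ / e * (A * Y)) ω ∂μ = ∫ ω, (ψ * Y) ω ∂μ := by
  have hcancel : ψ / e * μ[A * Y | m] =ᵐ[μ] ψ * μ[Y | m] := by
    filter_upwards [hcond, he0] with ω hω he0ω
    simp only [Pi.mul_apply, Pi.div_apply] at hω ⊢
    rw [hω]
    field_simp
  rw [← integral_mul_condExp_of_stronglyMeasurable hm (hψ.div he) hweighted hAY,
    integral_congr_ae hcancel, integral_mul_condExp_of_stronglyMeasurable hm hψ hψY hY]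

end MeasureTheory

theorem stmt16_general {Ω 𝒳 : Type*} [MeasurableSpace Ω] [StandardBorelSpace Ω]
    [MeasurableSpace 𝒳]
    (P : Measure Ω) [IsProbabilityMeasure P]
    (X : Ω → 𝒳) (hX : Measurable X)
    (A : Ω → ℝ) (hA : Measurable A) (hA01 : ∀ ω, A ω = 0 ∨ A ω = 1)
    (Y1 : Ω → ℝ) (hY1 : Measurable Y1) (hY1int : Integrable Y1 P)
    (hci : CondIndepFun (MeasurableSpace.comap X inferInstance) hX.comap_le A Y1 P)
    (g : 𝒳 → ℝ) (hg : Measurable g)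
    (hgpos : ∀ᵐ ω ∂P, 0 < g (X ω))
    (hgcond : (fun ω => g (X ω)) =ᵐ[P] P[A | MeasurableSpace.comap X inferInstance])
    (hint : Integrable (fun ω => |Y1 ω / g (X ω)|) P)
    (h : 𝒳 → ℝ) (hh : Measurable h) (hhbd : ∃ C : ℝ, ∀ x, |h x| ≤ C) :
    (∫ ω, h (X ω) * Y1 ω ∂P = ∫ ω, h (X ω) * (A ω / g (X ω)) * Y1 ω ∂P) ∧
    (∀ Y0 : Ω → ℝ,
      ∫ ω, h (X ω) * Y1 ω ∂P
        = ∫ ω, h (X ω) * A ω * (A ω * Y1 ω + (1 - A ω) * Y0 ω) / g (X ω) ∂P) := by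
  obtain ⟨C, hC⟩ := hhbd
  set m := MeasurableSpace.comap X inferInstance
  have hXm : Measurable[m] X := comap_measurable X
  have hA_le : ∀ ω, ‖A ω‖ ≤ 1 := fun ω => by rcases hA01 ω with hω | hω <;> simp [hω]
  have hA_int : Integrable A P :=
    (integrable_const 1).mono' hA.aestronglyMeasurable (ae_of_all _ hA_le)
  have hAY1_int : Integrable (A * Y1) P :=
    hY1int.bdd_mul hA.aestronglyMeasurable (ae_of_all _ hA_le)
  have hY1g_int : Integrable (fun ω => Y1 ω / g (X ω)) P :=
    (integrable_norm_iff (hY1.div (hg.comp hX)).aestronglyMeasurable).1 hint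
  have hweighted_int : Integrable ((h ∘ X) / (g ∘ X) * (A * Y1)) P := by
    refine (hY1g_int.bdd_mul (c := C) ((hh.comp hX).mul hA).aestronglyMeasurable
      (ae_of_all _ fun ω => ?_)).congr (ae_of_all _ fun ω => ?_)
    · simpa [abs_mul] using mul_le_mul (hC (X ω)) (hA_le ω) (norm_nonneg _)
        ((abs_nonneg _).trans (hC (X ω)))
    · simp only [Pi.mul_apply, Pi.div_apply, Function.comp_apply]; ring
  have hcond : P[A * Y1 | m] =ᵐ[P] (fun ω => g (X ω)) * P[Y1 | m] := by
    filter_upwards [hci.condExp_mul_ae_eq_mul_condExp hA hY1 hA_int hY1int hAY1_int, hgcond]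
      with ω h1 h2
    rw [h1, Pi.mul_apply, Pi.mul_apply, h2]
  have hipw : ∫ ω, h (X ω) * (A ω / g (X ω)) * Y1 ω ∂P = ∫ ω, h (X ω) * Y1 ω ∂P := by
    have := integral_div_mul_eq_integral_mul_of_condExp_mul_ae_eq hX.comap_le
      (hh.comp hXm).stronglyMeasurable (hg.comp hXm).stronglyMeasurable
      (hgpos.mono fun ω hω => hω.ne') hY1int hAY1_int
      (hY1int.bdd_mul (hh.comp hX).aestronglyMeasurable (ae_of_all _ fun ω => hC (X ω)))
      hweighted_int hcond
    refine Eq.trans ?_ this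
    congr 1 with ω
    simp only [Pi.mul_apply, Pi.div_apply, Function.comp_apply]
    ring
  refine ⟨hipw.symm, fun Y0 => hipw.symm.trans (integral_congr_ae (ae_of_all _ fun ω => ?_))⟩
  rcases hA01 ω with hω | hω <;> simp only [hω] <;> ring

/-- Under conditional independence of the treatment `A` and the counterfactual outcome `Y1`
given `σ(X)`, with propensity `g ∘ X` a version of `E[A ∣ σ(X)]` taking values in `(0,1]`, for
every bounded measurable `h` we have `E[h(X) Y1] = E[h(X) (A / g(X)) Y1]`; since `A Y1 = A Y`
for the observed outcome `Y = A Y1 + (1 − A) Y0`, the counterfactual mean is identified by the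
inverse-probability-weighted observed-data functional `E[h(X) A Y / g(X)]`. -/
theorem stmt16 {Ω 𝒳 : Type*} [MeasurableSpace Ω] [StandardBorelSpace Ω] [Nonempty Ω]
    [MeasurableSpace 𝒳] [StandardBorelSpace 𝒳]
    (P : Measure Ω) [IsProbabilityMeasure P]
    (X : Ω → 𝒳) (hX : Measurable X)
    (A : Ω → ℝ) (hA : Measurable A) (hA01 : ∀ ω, A ω = 0 ∨ A ω = 1)
    (Y1 : Ω → ℝ) (hY1 : Measurable Y1) (hY1int : Integrable Y1 P)
    (hci : CondIndepFun (MeasurableSpace.comap X inferInstance) hX.comap_le A Y1 P)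
    (g : 𝒳 → ℝ) (hg : Measurable g) (hgmem : ∀ x, g x ∈ Set.Ioc (0 : ℝ) 1)
    (hgpos : ∀ᵐ ω ∂P, 0 < g (X ω))
    (hgcond : (fun ω => g (X ω)) =ᵐ[P] P[A | MeasurableSpace.comap X inferInstance])
    (hint : Integrable (fun ω => |Y1 ω / g (X ω)|) P)
    (h : 𝒳 → ℝ) (hh : Measurable h) (hhbd : ∃ C : ℝ, ∀ x, |h x| ≤ C) :
    (∫ ω, h (X ω) * Y1 ω ∂P = ∫ ω, h (X ω) * (A ω / g (X ω)) * Y1 ω ∂P) ∧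
    (∀ Y0 : Ω → ℝ,
      ∫ ω, h (X ω) * Y1 ω ∂P
        = ∫ ω, h (X ω) * A ω * (A ω * Y1 ω + (1 - A ω) * Y0 ω) / g (X ω) ∂P) :=
  stmt16_general P X hX A hA hA01 Y1 hY1 hY1int hci g hg hgpos hgcond hint h hh hhbd
end

section
/- Let Y, Δ : Ω → {0,1} be measurable, assume that Δ and Y are conditionally independent given σ(X), and let g : 𝒳 → (0,1] be measurable such that g ∘ X is a version of the conditional expectation E[Δ ∣ σ(X)], with g(X) > 0 almost surely. Define U := Δ Y. Then for every measurable f : 𝒳 → {0,1}, P( Y = f(X) ) = E[ (Δ / g(X)) · 1{ U = f(X) } ]; that is, under missingness at random and positivity, the classification accuracy of f is identified by an observed-data functional depending only on (X, Δ, U). -/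
/-!
With `A = {Δ = 1}` and `B = {Y = f(X)}`, the integrand is `1_{A ∩ B} / g(X)`. On each of the
`σ(X)`-events `{f(X) = 1}` and `{f(X) = 0}` the event `B` is an event of `Y` alone, so conditional
independence gives `P(A ∩ B | X) = g(X) P(B | X)`. Pulling the `σ(X)`-measurable weight `1 / g(X)`
out of the conditional expectation and integrating leaves `P(B)`. The weight need not be bounded,
so it is pulled out of the Lebesgue conditional expectation, which needs no integrability.
-/

open MeasureTheory ProbabilityTheory

open scoped ENNReal

namespace MeasureTheory

variable {Ω : Type*} {m mΩ : MeasurableSpace Ω} {P : Measure[mΩ] Ω}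

theorem lintegral_condLExp_mul (hm : m ≤ mΩ) [SigmaFinite (P.trim hm)] {X h : Ω → ℝ≥0∞}
    (hX : Measurable X) (hh : Measurable[m] h) :
    ∫⁻ ω, P⁻[X|m] ω * h ω ∂P = ∫⁻ ω, X ω * h ω ∂P := by
  have htrim : (P.withDensity P⁻[X|m]).trim hm = (P.withDensity X).trim hm := by
    refine @Measure.ext _ m _ _ fun s hs => ?_
    rw [trim_measurableSet_eq hm hs, trim_measurableSet_eq hm hs, withDensity_apply _ (hm s hs),
      withDensity_apply _ (hm s hs), setLIntegral_condLExp hm _ _ hs]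
  have hh' : Measurable h := hh.mono hm le_rfl
  simp_rw [← Pi.mul_apply,
    ← lintegral_withDensity_eq_lintegral_mul _ (measurable_condLExp' _ _ _) hh',
    ← lintegral_withDensity_eq_lintegral_mul _ hX hh', ← lintegral_trim hm hh, htrim]

end MeasureTheory

namespace ProbabilityTheory

variable {Ω : Type*} {m mΩ : MeasurableSpace Ω} {P : Measure[mΩ] Ω} [IsFiniteMeasure P]

theorem condExp_indicator_ite (hm : m ≤ mΩ) {C T₁ T₀ : Set Ω} (hC : MeasurableSet[m] C)
    (hT₁ : MeasurableSet T₁) (hT₀ : MeasurableSet T₀) :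
    P⟦C.ite T₁ T₀ | m⟧ =ᵐ[P] C.indicator (P⟦T₁ | m⟧) + Cᶜ.indicator (P⟦T₀ | m⟧) := by
  have hsplit : (C.ite T₁ T₀).indicator (fun _ => (1 : ℝ)) =
      C.indicator (T₁.indicator fun _ => 1) + Cᶜ.indicator (T₀.indicator fun _ => 1) := by
    rw [Set.indicator_indicator, Set.indicator_indicator, Set.ite, Set.inter_comm T₁, Set.sdiff_eq,
      Set.inter_comm T₀, Set.indicator_union_of_disjoint
        (disjoint_compl_right.mono Set.inter_subset_left Set.inter_subset_left)]
    rfl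
  have hint : ∀ {T : Set Ω}, MeasurableSet T → Integrable (T.indicator fun _ => (1 : ℝ)) P :=
    fun hT => (integrable_const 1).indicator hT
  rw [hsplit]
  filter_upwards [condExp_add ((hint hT₁).indicator (hm C hC))
      ((hint hT₀).indicator (hm C hC).compl) m,
    condExp_indicator (hint hT₁) hC, condExp_indicator (hint hT₀) hC.compl] with ω h h₁ h₀
  rw [h, Pi.add_apply, h₁, h₀, Pi.add_apply]

theorem condExp_inter_ite_eq_mul (hm : m ≤ mΩ) {A C T₁ T₀ : Set Ω} (hC : MeasurableSet[m] C)
    (hA : MeasurableSet A) (hT₁ : MeasurableSet T₁) (hT₀ : MeasurableSet T₀)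
    (h₁ : P⟦A ∩ T₁ | m⟧ =ᵐ[P] P⟦A | m⟧ * P⟦T₁ | m⟧)
    (h₀ : P⟦A ∩ T₀ | m⟧ =ᵐ[P] P⟦A | m⟧ * P⟦T₀ | m⟧) :
    P⟦A ∩ C.ite T₁ T₀ | m⟧ =ᵐ[P] P⟦A | m⟧ * P⟦C.ite T₁ T₀ | m⟧ := by
  rw [← Set.ite_same C A, ← Set.ite_inter_inter, Set.ite_same]
  filter_upwards [condExp_indicator_ite (P := P) hm hC (hA.inter hT₁) (hA.inter hT₀),
    condExp_indicator_ite (P := P) hm hC hT₁ hT₀, h₁, h₀] with ω hAT hT e₁ e₀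
  by_cases hω : ω ∈ C <;> simp_all

theorem integral_indicator_inter_div_eq (hm : m ≤ mΩ) {A B : Set Ω} (hA : MeasurableSet A)
    (hB : MeasurableSet B) {G : Ω → ℝ} (hG : Measurable[m] G) (hGpos : ∀ᵐ ω ∂P, 0 < G ω)
    (hfac : P⟦A ∩ B | m⟧ =ᵐ[P] G * P⟦B | m⟧) :
    ∫ ω, (A ∩ B).indicator (fun _ => (1 : ℝ)) ω / G ω ∂P = (P B).toReal := by
  have hint : ∀ {T : Set Ω}, MeasurableSet T → Integrable (T.indicator fun _ => (1 : ℝ)) P :=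
    fun hT => (integrable_const 1).indicator hT
  have hnonneg : ∀ (T : Set Ω) ω, 0 ≤ T.indicator (fun _ => (1 : ℝ)) ω :=
    fun T => Set.indicator_nonneg fun _ _ => zero_le_one
  have hS := hA.inter hB
  have hlint : ∫⁻ ω, ENNReal.ofReal ((A ∩ B).indicator (fun _ => (1 : ℝ)) ω / G ω) ∂P = P B :=
    calc _ = ∫⁻ ω, ENNReal.ofReal ((A ∩ B).indicator (fun _ => (1 : ℝ)) ω)
          * ENNReal.ofReal (G ω)⁻¹ ∂P := by
          simp_rw [div_eq_mul_inv, ENNReal.ofReal_mul (hnonneg _ _)]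
      _ = ∫⁻ ω, P⁻[fun ω => ENNReal.ofReal ((A ∩ B).indicator (fun _ => (1 : ℝ)) ω)|m] ω
          * ENNReal.ofReal (G ω)⁻¹ ∂P :=
          (lintegral_condLExp_mul hm (by fun_prop) hG.inv.ennreal_ofReal).symm
      _ = ∫⁻ ω, ENNReal.ofReal ((P⟦A ∩ B | m⟧) ω) * ENNReal.ofReal (G ω)⁻¹ ∂P := by
          refine lintegral_congr_ae ?_
          filter_upwards [condLExp_ofReal m (hint hS) (.of_forall (hnonneg _))] with ω h
          rw [h]
      _ = ∫⁻ ω, ENNReal.ofReal ((P⟦B | m⟧) ω) ∂P := by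
          refine lintegral_congr_ae ?_
          filter_upwards [hfac, hGpos] with ω h hGω
          rw [h, ← ENNReal.ofReal_mul' (inv_nonneg.mpr hGω.le), Pi.mul_apply, mul_comm,
            ← mul_assoc, inv_mul_cancel₀ hGω.ne', one_mul]
      _ = ∫⁻ ω, P⁻[fun ω => ENNReal.ofReal (B.indicator (fun _ => (1 : ℝ)) ω)|m] ω ∂P := by
          refine lintegral_congr_ae ?_
          filter_upwards [condLExp_ofReal m (hint hB) (.of_forall (hnonneg _))] with ω h
          rw [h]
      _ = P B := by
          rw [lintegral_condLExp hm, ← lintegral_indicator_one hB]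
          congr with ω
          by_cases hω : ω ∈ B <;> simp [hω]
  rw [integral_eq_lintegral_of_nonneg_ae, hlint]
  · filter_upwards [hGpos] with ω hGω using div_nonneg (hnonneg _ _) hGω.le
  · exact ((measurable_const.indicator hS).div (hG.mono hm le_rfl)).aestronglyMeasurable

end ProbabilityTheory

theorem stmt17_general {Ω 𝒳 : Type*} [MeasurableSpace Ω] [StandardBorelSpace Ω]
    [MeasurableSpace 𝒳]
    (P : Measure Ω) [IsProbabilityMeasure P]
    (X : Ω → 𝒳) (hX : Measurable X)
    (Y Δ : Ω → ℝ) (hY : Measurable Y) (hΔ : Measurable Δ)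
    (hY01 : ∀ ω, Y ω = 0 ∨ Y ω = 1) (hΔ01 : ∀ ω, Δ ω = 0 ∨ Δ ω = 1)
    (hci : CondIndepFun (MeasurableSpace.comap X inferInstance) hX.comap_le Δ Y P)
    (g : 𝒳 → ℝ) (hg : Measurable g)
    (hgpos : ∀ᵐ ω ∂P, 0 < g (X ω))
    (hgcond : (fun ω => g (X ω)) =ᵐ[P] P[Δ | MeasurableSpace.comap X inferInstance])
    (U : Ω → ℝ) (hU : ∀ ω, U ω = Δ ω * Y ω)
    (f : 𝒳 → ℝ) (hf : Measurable f) (hf01 : ∀ x, f x = 0 ∨ f x = 1) :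
    (P {ω | Y ω = f (X ω)}).toReal
      = ∫ ω, (Δ ω / g (X ω)) *
          Set.indicator {ω | U ω = f (X ω)} (fun _ => (1 : ℝ)) ω ∂P := by
  set A := Δ ⁻¹' {1}
  set B := {ω | Y ω = f (X ω)}
  have hA : MeasurableSet A := hΔ (measurableSet_singleton 1)
  have hBite : B = (X ⁻¹' (f ⁻¹' {1})).ite (Y ⁻¹' {1}) (Y ⁻¹' {0}) := by
    ext ω
    rcases hf01 (X ω) with h | h <;> rcases hY01 ω with h' | h' <;> simp [B, Set.ite, h, h']
  have hCI := (condIndepFun_iff_condExp_inter_preimage_eq_mul hΔ hY).mp hci {1}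
  have hprod : P⟦A ∩ B | MeasurableSpace.comap X inferInstance⟧ =ᵐ[P]
      P⟦A | MeasurableSpace.comap X inferInstance⟧
        * P⟦B | MeasurableSpace.comap X inferInstance⟧ := by
    rw [hBite]
    exact condExp_inter_ite_eq_mul hX.comap_le ⟨_, hf (measurableSet_singleton 1), rfl⟩ hA
      (hY (measurableSet_singleton 1)) (hY (measurableSet_singleton 0))
      (hCI _ (measurableSet_singleton 1) (measurableSet_singleton 1))
      (hCI _ (measurableSet_singleton 1) (measurableSet_singleton 0))
  have hΔA : Δ = A.indicator fun _ => 1 := by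
    ext ω
    rcases hΔ01 ω with h | h <;> simp [A, h]
  have hfac : P⟦A ∩ B | MeasurableSpace.comap X inferInstance⟧ =ᵐ[P]
      (fun ω => g (X ω)) * P⟦B | MeasurableSpace.comap X inferInstance⟧ := by
    rw [hΔA] at hgcond
    filter_upwards [hprod, hgcond] with ω h hgω
    rw [h, Pi.mul_apply, Pi.mul_apply, hgω]
  have hintegrand :
      (fun ω => Δ ω / g (X ω) * {ω | U ω = f (X ω)}.indicator (fun _ => (1 : ℝ)) ω)
        = fun ω => (A ∩ B).indicator (fun _ => (1 : ℝ)) ω / g (X ω) := by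
    ext ω
    rcases hΔ01 ω with h | h <;> by_cases hω : Y ω = f (X ω) <;> simp [A, B, hU, h, hω]
  rw [hintegrand]
  exact (integral_indicator_inter_div_eq hX.comap_le hA (measurableSet_eq_fun hY (hf.comp hX))
    (hg.comp (comap_measurable X)) hgpos hfac).symm

/-- Under missingness at random (`Δ ⫫ Y ∣ σ(X)`) and positivity (`g ∘ X`, a version of
`E[Δ ∣ σ(X)]`, takes values in `(0,1]`), for every measurable `{0,1}`-valued `f`, with
`U := Δ Y`, the classification accuracy is identified by the observed-data functional:
`P(Y = f(X)) = E[(Δ / g(X)) · 1{U = f(X)}]`. -/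
theorem stmt17 {Ω 𝒳 : Type*} [MeasurableSpace Ω] [StandardBorelSpace Ω] [Nonempty Ω]
    [MeasurableSpace 𝒳] [StandardBorelSpace 𝒳]
    (P : Measure Ω) [IsProbabilityMeasure P]
    (X : Ω → 𝒳) (hX : Measurable X)
    (Y Δ : Ω → ℝ) (hY : Measurable Y) (hΔ : Measurable Δ)
    (hY01 : ∀ ω, Y ω = 0 ∨ Y ω = 1) (hΔ01 : ∀ ω, Δ ω = 0 ∨ Δ ω = 1)
    (hci : CondIndepFun (MeasurableSpace.comap X inferInstance) hX.comap_le Δ Y P)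
    (g : 𝒳 → ℝ) (hg : Measurable g) (hgmem : ∀ x, g x ∈ Set.Ioc (0 : ℝ) 1)
    (hgpos : ∀ᵐ ω ∂P, 0 < g (X ω))
    (hgcond : (fun ω => g (X ω)) =ᵐ[P] P[Δ | MeasurableSpace.comap X inferInstance])
    (U : Ω → ℝ) (hU : ∀ ω, U ω = Δ ω * Y ω)
    (f : 𝒳 → ℝ) (hf : Measurable f) (hf01 : ∀ x, f x = 0 ∨ f x = 1) :
    (P {ω | Y ω = f (X ω)}).toReal
      = ∫ ω, (Δ ω / g (X ω)) *
          Set.indicator {ω | U ω = f (X ω)} (fun _ => (1 : ℝ)) ω ∂P :=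
  stmt17_general P X hX Y Δ hY hΔ hY01 hΔ01 hci g hg hgpos hgcond U hU f hf hf01
end
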